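/- arXiv:2404.10184 — 7 statements merged into one kernel-verified Lean document; each statement's English description precedes it below -/
import Mathlib

section
/- Let X be a G-tree and let H, H' ≤ G be commensurable subgroups (H ⊓ H' has finite index in both H and H'). If H is elliptic (some vertex of X is fixed by every element of H), then H' is elliptic. -/
open SimpleGraph

/-- A `G`-tree: a simple graph `T` on vertex set `V` that is a tree (connected and acyclic),
together with an action of `G` on `V` by automorphisms of `T` (adjacency is preserved)
and without inversions. -/
structure IsGTree (G : Type*) [Group G] {V : Type*} [MulAction G V] (T : SimpleGraph V) :
    Prop where
  isTree : T.IsTree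
  adj_smul : ∀ (g : G) (u v : V), T.Adj u v → T.Adj (g • u) (g • v)
  no_inversions : ∀ (g : G) (u v : V), T.Adj u v → ¬(g • u = v ∧ g • v = u)

namespace GTAux

variable {V : Type*} {X : SimpleGraph V}

lemma path_length_eq_dist (hT : X.IsTree) {u v : V} (p : X.Walk u v) (hp : p.IsPath) :
    p.length = X.dist u v := by
  obtain ⟨q, hq, hql⟩ := hT.isConnected.exists_path_of_dist u v
  rw [(hT.existsUnique_path u v).unique hp hq, hql]

lemma getVert_one_takeUntil [DecidableEq V] {u v a : V} (p : X.Walk u v)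
    (ha : a ∈ p.support) (hne : u ≠ a) :
    (p.takeUntil a ha).getVert 1 = p.getVert 1 := by
  have key := congrArg (fun w : X.Walk u v => w.getVert 1) (p.take_spec ha)
  simp only [Walk.getVert_append] at key
  have hr0 : (p.takeUntil a ha).length ≠ 0 := fun h => hne (Walk.eq_of_length_eq_zero h)
  by_cases h1 : 1 < (p.takeUntil a ha).length
  · rw [if_pos h1] at key; exact key
  · have hlen : (p.takeUntil a ha).length = 1 := by omega
    rw [if_neg h1] at key
    rw [hlen] at key
    simp only [Nat.sub_self, Walk.getVert_zero] at key
    have hend : (p.takeUntil a ha).getVert 1 = a := by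
      rw [← hlen]; exact Walk.getVert_length _
    rw [hend]; exact key

lemma step_exists (hconn : X.Connected) {x s : V} (h : 0 < X.dist x s) :
    ∃ z, X.Adj x z ∧ X.dist z s = X.dist x s - 1 := by
  obtain ⟨p, hp⟩ := hconn.exists_walk_length_eq_dist x s
  cases p with
  | nil => simp at h
  | @cons _ z _ hadj q =>
    refine ⟨z, hadj, le_antisymm ?_ ?_⟩
    · have := SimpleGraph.dist_le q
      simp [Walk.length_cons] at hp
      omega
    · have htri := hconn.dist_triangle (u := x) (v := z) (w := s)
      have h1 : X.dist x z ≤ 1 := by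
        have := SimpleGraph.dist_le (Walk.cons hadj Walk.nil)
        simpa using this
      omega

lemma step_unique (hT : X.IsTree) {x s z₁ z₂ : V} (h : 0 < X.dist x s)
    (h1 : X.Adj x z₁) (hd1 : X.dist z₁ s = X.dist x s - 1)
    (h2 : X.Adj x z₂) (hd2 : X.dist z₂ s = X.dist x s - 1) : z₁ = z₂ := by
  obtain ⟨q₁, hq₁, hl₁⟩ := hT.isConnected.exists_path_of_dist z₁ s
  obtain ⟨q₂, hq₂, hl₂⟩ := hT.isConnected.exists_path_of_dist z₂ s
  have hp₁ : (Walk.cons h1 q₁).IsPath := by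
    apply Walk.isPath_of_length_eq_dist
    simp [Walk.length_cons, hl₁, hd1]; omega
  have hp₂ : (Walk.cons h2 q₂).IsPath := by
    apply Walk.isPath_of_length_eq_dist
    simp [Walk.length_cons, hl₂, hd2]; omega
  have heq := (hT.existsUnique_path x s).unique hp₁ hp₂
  have := congrArg (fun w : X.Walk x s => w.getVert 1) heq
  simpa [Walk.getVert_cons _ _ one_ne_zero] using this

lemma diverge (hT : X.IsTree) {x s t z₁ z₂ : V}
    (hs : 0 < X.dist x s) (ht : 0 < X.dist x t)
    (h1 : X.Adj x z₁) (hd1 : X.dist z₁ s = X.dist x s - 1)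
    (h2 : X.Adj x z₂) (hd2 : X.dist z₂ t = X.dist x t - 1)
    (hne : z₁ ≠ z₂) : X.dist s t = X.dist x s + X.dist x t := by
  classical
  obtain ⟨q₁, hq₁, hl₁⟩ := hT.isConnected.exists_path_of_dist z₁ s
  obtain ⟨q₂, hq₂, hl₂⟩ := hT.isConnected.exists_path_of_dist z₂ t
  set p₁ : X.Walk x s := Walk.cons h1 q₁ with hp₁def
  set p₂ : X.Walk x t := Walk.cons h2 q₂ with hp₂def
  have hlen₁ : p₁.length = X.dist x s := by simp [hp₁def, Walk.length_cons, hl₁, hd1]; omega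
  have hlen₂ : p₂.length = X.dist x t := by simp [hp₂def, Walk.length_cons, hl₂, hd2]; omega
  have hp₁ : p₁.IsPath := Walk.isPath_of_length_eq_dist _ hlen₁
  have hp₂ : p₂.IsPath := Walk.isPath_of_length_eq_dist _ hlen₂
  have hv₁ : p₁.getVert 1 = z₁ := by simp [hp₁def, Walk.getVert_cons _ _ one_ne_zero]
  have hv₂ : p₂.getVert 1 = z₂ := by simp [hp₂def, Walk.getVert_cons _ _ one_ne_zero]
  have hinter : ∀ a, a ∈ p₁.support → a ∈ p₂.support → a = x := by
    intro a ha₁ ha₂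
    by_contra hax
    have hxa : x ≠ a := fun h => hax h.symm
    have hr₁ : (p₁.takeUntil a ha₁).IsPath := hp₁.takeUntil ha₁
    have hr₂ : (p₂.takeUntil a ha₂).IsPath := hp₂.takeUntil ha₂
    have hreq := (hT.existsUnique_path x a).unique hr₁ hr₂
    have : z₁ = z₂ := by
      rw [← hv₁, ← hv₂, ← getVert_one_takeUntil p₁ ha₁ hxa, ← getVert_one_takeUntil p₂ ha₂ hxa,
        hreq]
    exact hne this
  have hxnotin : x ∉ p₂.support.tail := by
    intro hmem
    have := hp₂.support_nodup
    rw [p₂.support_eq_cons] at this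
    exact (List.nodup_cons.mp this).1 hmem
  have hw : (p₁.reverse.append p₂).IsPath := by
    rw [Walk.isPath_def, Walk.support_append]
    refine List.Nodup.append (hp₁.reverse.support_nodup) ?_ ?_
    · have := hp₂.support_nodup
      rw [p₂.support_eq_cons] at this
      exact (List.nodup_cons.mp this).2
    · intro a ha₁ ha₂
      have ha₁' : a ∈ p₁.support := by
        rwa [Walk.support_reverse, List.mem_reverse] at ha₁
      have := hinter a ha₁' (List.mem_of_mem_tail ha₂)
      subst this
      exact hxnotin ha₂
  have := path_length_eq_dist hT _ hw
  rw [Walk.length_append, Walk.length_reverse, hlen₁, hlen₂] at this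
  exact this.symm

variable {G : Type*} [Group G] [MulAction G V]

lemma dist_smul (hX : IsGTree G X) (g : G) (u v : V) :
    X.dist (g • u) (g • v) = X.dist u v := by
  have key : ∀ (g : G) (u v : V), X.dist (g • u) (g • v) ≤ X.dist u v := by
    intro g u v
    obtain ⟨p, hp⟩ := hX.isTree.isConnected.exists_walk_length_eq_dist u v
    let f : X →g X := ⟨fun x => g • x, fun {a b} hab => hX.adj_smul g a b hab⟩
    calc X.dist (g • u) (g • v) ≤ (p.map f).length := SimpleGraph.dist_le _
      _ = p.length := by simp
      _ = X.dist u v := hp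
  refine le_antisymm (key g u v) ?_
  have h2 := key g⁻¹ (g • u) (g • v)
  simpa using h2

lemma fixed_of_invariant (hX : IsGTree G X) (H' : Subgroup G) :
    ∀ (n : ℕ) (S : Finset V), S.Nonempty → (∀ g ∈ H', ∀ x ∈ S, g • x ∈ S) →
      (∀ x ∈ S, ∀ y ∈ S, X.dist x y ≤ n) → ∃ v : V, ∀ g ∈ H', g • v = v := by
  have hconn := hX.isTree.isConnected
  intro n
  induction n with
  | zero =>
    intro S hne hinv hbound
    obtain ⟨x, hx⟩ := hne
    refine ⟨x, fun g hg => ?_⟩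
    have hgx := hinv g hg x hx
    have hle := hbound x hx (g • x) hgx
    exact ((hconn.dist_eq_zero_iff).mp (Nat.le_zero.mp hle)).symm
  | succ n ih =>
    intro S hne hinv hbound
    by_cases hall : ∀ x ∈ S, ∀ y ∈ S, X.dist x y ≤ n
    · exact ih S hne hinv hall
    push_neg at hall
    obtain ⟨x₀, hx₀, y₀, hy₀, hgt⟩ := hall
    have hD0 : X.dist x₀ y₀ = n + 1 := le_antisymm (hbound _ hx₀ _ hy₀) hgt
    rcases Nat.eq_zero_or_pos n with hn | hn
    · -- diameter 1 : S = {x₀, y₀} with x₀ ~ y₀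
      subst hn
      have hadj : X.Adj x₀ y₀ := SimpleGraph.dist_eq_one_iff_adj.mp hD0
      have notri : ∀ a b c : V, X.Adj a b → X.Adj b c → X.Adj a c → False := by
        intro a b c hab hbc hac
        have hp1 : (Walk.cons hab Walk.nil).IsPath := by
          simp [Walk.isPath_def, hab.ne]
        have hp2 : (Walk.cons hac (Walk.cons hbc.symm Walk.nil)).IsPath := by
          simp [Walk.isPath_def, hac.ne, hab.ne, hbc.ne']
        have heq := (hX.isTree.existsUnique_path a b).unique hp1 hp2
        have := congrArg Walk.length heq
        simp at this
      have hmem : ∀ z ∈ S, z = x₀ ∨ z = y₀ := by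
        intro z hz
        by_contra hzc
        push_neg at hzc
        have hz1 : X.Adj z x₀ := by
          have hle := hbound z hz x₀ hx₀
          have hpos := hconn.pos_dist_of_ne hzc.1
          exact SimpleGraph.dist_eq_one_iff_adj.mp (by omega)
        have hz2 : X.Adj z y₀ := by
          have hle := hbound z hz y₀ hy₀
          have hpos := hconn.pos_dist_of_ne hzc.2
          exact SimpleGraph.dist_eq_one_iff_adj.mp (by omega)
        exact notri x₀ z y₀ hz1.symm hz2 hadj
      refine ⟨x₀, fun g hg => ?_⟩
      have hne' : x₀ ≠ y₀ := hadj.ne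
      rcases hmem _ (hinv g hg x₀ hx₀) with h | h
      · exact h
      · rcases hmem _ (hinv g hg y₀ hy₀) with h' | h'
        · exact absurd ⟨h, h'⟩ (hX.no_inversions g x₀ y₀ hadj)
        · exact absurd (smul_left_cancel g (h.trans h'.symm)) hne'
    · -- diameter = n + 1 ≥ 2
      classical
      have claimA : ∀ x : V, (∃ s ∈ S, X.dist x s = n + 1) →
          ∃ z, X.Adj x z ∧ ∀ s ∈ S, X.dist x s = n + 1 → X.dist z s = n := by
        rintro x ⟨s₀, hs₀, hd₀⟩
        obtain ⟨z, hz, hzd⟩ := step_exists hconn (x := x) (s := s₀) (by omega)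
        refine ⟨z, hz, ?_⟩
        intro s hs hds
        obtain ⟨z', hz', hzd'⟩ := step_exists hconn (x := x) (s := s) (by omega)
        by_cases hzz : z = z'
        · subst hzz; omega
        · have hdiv := diverge hX.isTree (x := x) (s := s₀) (t := s)
            (by omega) (by omega) hz hzd hz' hzd' hzz
          have hb := hbound s₀ hs₀ s hs
          omega
      set f : V → V :=
        fun x => if h : ∃ s ∈ S, X.dist x s = n + 1 then (claimA x h).choose else x with hfdef
      have hfP : ∀ (x : V) (h : ∃ s ∈ S, X.dist x s = n + 1),
          X.Adj x (f x) ∧ ∀ s ∈ S, X.dist x s = n + 1 → X.dist (f x) s = n := by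
        intro x h
        have : f x = (claimA x h).choose := dif_pos h
        rw [this]
        exact (claimA x h).choose_spec
      have hfnot : ∀ x : V, ¬(∃ s ∈ S, X.dist x s = n + 1) → f x = x :=
        fun x h => dif_neg h
      have uniq : ∀ (x z₁ z₂ : V), (∃ s ∈ S, X.dist x s = n + 1) →
          X.Adj x z₁ → (∀ s ∈ S, X.dist x s = n + 1 → X.dist z₁ s = n) →
          X.Adj x z₂ → (∀ s ∈ S, X.dist x s = n + 1 → X.dist z₂ s = n) → z₁ = z₂ := by
        rintro x z₁ z₂ ⟨s₀, hs₀, hd₀⟩ h1 hp1 h2 hp2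
        have e1 := hp1 s₀ hs₀ hd₀
        have e2 := hp2 s₀ hs₀ hd₀
        exact step_unique hX.isTree (by omega : 0 < X.dist x s₀) h1 (by omega) h2 (by omega)
      have hfar_smul : ∀ g ∈ H', ∀ x : V, (∃ s ∈ S, X.dist x s = n + 1) →
          (∃ s ∈ S, X.dist (g • x) s = n + 1) := by
        rintro g hg x ⟨s, hs, hd⟩
        exact ⟨g • s, hinv g hg s hs, by rw [dist_smul hX, hd]⟩
      have hequiv : ∀ g ∈ H', ∀ x : V, f (g • x) = g • f x := by
        intro g hg x
        by_cases h : ∃ s ∈ S, X.dist x s = n + 1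
        · have hg' : ∃ s ∈ S, X.dist (g • x) s = n + 1 := hfar_smul g hg x h
          have P1 := hfP (g • x) hg'
          have P2adj : X.Adj (g • x) (g • f x) := hX.adj_smul g x (f x) (hfP x h).1
          have P2 : ∀ s ∈ S, X.dist (g • x) s = n + 1 → X.dist (g • f x) s = n := by
            intro s hs hd
            have hs' : g⁻¹ • s ∈ S := hinv g⁻¹ (inv_mem hg) s hs
            have hd' : X.dist x (g⁻¹ • s) = n + 1 := by
              rw [← dist_smul hX g, smul_inv_smul]; exact hd
            have hres := (hfP x h).2 _ hs' hd'
            rw [← dist_smul hX g, smul_inv_smul] at hres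
            exact hres
          exact uniq (g • x) _ _ hg' P1.1 P1.2 P2adj P2
        · have h' : ¬ ∃ s ∈ S, X.dist (g • x) s = n + 1 := by
            intro hc
            apply h
            have := hfar_smul g⁻¹ (inv_mem hg) (g • x) hc
            simpa using this
          rw [hfnot _ h', hfnot _ h]
      have hmixed : ∀ x ∈ S, ∀ y ∈ S, (∃ s ∈ S, X.dist x s = n + 1) →
          ¬(∃ s ∈ S, X.dist y s = n + 1) → X.dist (f x) (f y) ≤ n := by
        intro x hx y hy hfx hfy
        rw [hfnot y hfy]
        have hxy : x ≠ y := by rintro rfl; exact hfy hfx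
        have hk1 : 0 < X.dist x y := hconn.pos_dist_of_ne hxy
        have hkle : X.dist x y ≤ n + 1 := hbound x hx y hy
        have hkn : X.dist x y ≠ n + 1 := by
          intro hc
          exact hfy ⟨x, hx, by rw [SimpleGraph.dist_comm]; exact hc⟩
        obtain ⟨z', hz', hzd'⟩ := step_exists hconn hk1
        obtain ⟨s₀, hs₀, hd₀⟩ := hfx
        have hfx1 := hfP x ⟨s₀, hs₀, hd₀⟩
        have hfx2 := hfx1.2 s₀ hs₀ hd₀
        by_cases hzz : f x = z'
        · rw [hzz]; omega
        · have hdiv := diverge hX.isTree (x := x) (s := s₀) (t := y)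
            (by omega) hk1 hfx1.1 (by omega) hz' hzd' hzz
          have hb := hbound s₀ hs₀ y hy
          omega
      have hbound' : ∀ a ∈ S.image f, ∀ b ∈ S.image f, X.dist a b ≤ n := by
        intro a ha b hb'
        obtain ⟨x, hx, rfl⟩ := Finset.mem_image.mp ha
        obtain ⟨y, hy, rfl⟩ := Finset.mem_image.mp hb'
        by_cases hfx : ∃ s ∈ S, X.dist x s = n + 1
        · by_cases hfy : ∃ s ∈ S, X.dist y s = n + 1
          · by_cases hxy : x = y
            · subst hxy
              rw [SimpleGraph.dist_self]
              omega
            have hk1 : 0 < X.dist x y := hconn.pos_dist_of_ne hxy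
            have hkle := hbound x hx y hy
            have hfx1 := hfP x hfx
            have hfy1 := hfP y hfy
            by_cases hk : X.dist x y = n + 1
            · -- diametral pair
              have h1 : X.dist (f x) y = n := hfx1.2 y hy hk
              have h2 : X.dist (f y) x = n := hfy1.2 x hx (by rw [SimpleGraph.dist_comm]; exact hk)
              have hyfx : X.dist y (f x) = n := by rw [SimpleGraph.dist_comm]; exact h1
              have hfxy0 : 0 < X.dist y (f x) := by omega
              obtain ⟨w, hw, hwd⟩ := step_exists hconn hfxy0
              have hfx_x : X.dist (f x) x = 1 :=
                SimpleGraph.dist_eq_one_iff_adj.mpr hfx1.1.symm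
              have hyw : X.dist y w = 1 := SimpleGraph.dist_eq_one_iff_adj.mpr hw
              have hyx : X.dist y x = n + 1 := by rw [SimpleGraph.dist_comm]; exact hk
              have hwx : X.dist w x = n := by
                have hup := hconn.dist_triangle (u := w) (v := f x) (w := x)
                have hlow := hconn.dist_triangle (u := y) (v := w) (w := x)
                omega
              have hweq : w = f y := by
                refine step_unique hX.isTree (x := y) (s := x)
                  (by omega) hw (by omega) hfy1.1 (by omega)
              rw [← hweq]
              have : X.dist w (f x) = n - 1 := by omega
              rw [SimpleGraph.dist_comm]
              omega
            · -- non-diametral pair, both far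
              obtain ⟨z', hz', hzd'⟩ := step_exists hconn hk1
              obtain ⟨s₀, hs₀, hd₀⟩ := hfx
              have hfx2 := hfx1.2 s₀ hs₀ hd₀
              by_cases hzz : f x = z'
              · have hfyadj : X.dist y (f y) = 1 :=
                  SimpleGraph.dist_eq_one_iff_adj.mpr hfy1.1
                have htri := hconn.dist_triangle (u := f x) (v := y) (w := f y)
                rw [← hzz] at hzd'
                omega
              · have hdiv := diverge hX.isTree (x := x) (s := s₀) (t := y)
                  (by omega) hk1 hfx1.1 (by omega) hz' hzd' hzz
                have hb := hbound s₀ hs₀ y hy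
                omega
          · exact hmixed x hx y hy hfx hfy
        · by_cases hfy : ∃ s ∈ S, X.dist y s = n + 1
          · rw [SimpleGraph.dist_comm]
            exact hmixed y hy x hx hfy hfx
          · rw [hfnot x hfx, hfnot y hfy]
            have hle := hbound x hx y hy
            have hneq : X.dist x y ≠ n + 1 := fun hc => hfy ⟨x, hx, by
              rw [SimpleGraph.dist_comm]; exact hc⟩
            omega
      have hinv' : ∀ g ∈ H', ∀ a ∈ S.image f, g • a ∈ S.image f := by
        intro g hg a ha
        obtain ⟨x, hx, rfl⟩ := Finset.mem_image.mp ha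
        rw [← hequiv g hg x]
        exact Finset.mem_image_of_mem f (hinv g hg x hx)
      exact ih (S.image f) (hne.image f) hinv' hbound'

end GTAux

/-- If `H` and `H'` are commensurable subgroups of `G` (their intersection has finite
index in both) and `H` is elliptic on the `G`-tree `X`, then `H'` is elliptic. -/
theorem elliptic_of_commensurable_elliptic
    (G : Type*) [Group G] (V : Type*) [MulAction G V] (X : SimpleGraph V)
    (hX : IsGTree G X)
    (H H' : Subgroup G)
    (hcomm₁ : ((H ⊓ H').subgroupOf H).FiniteIndex)
    (hcomm₂ : ((H ⊓ H').subgroupOf H').FiniteIndex)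
    (hell : ∃ v : V, ∀ h ∈ H, h • v = v) :
    ∃ v : V, ∀ h ∈ H', h • v = v := by
  classical
  obtain ⟨v, hv⟩ := hell
  haveI := hcomm₂
  have hst : (H ⊓ H').subgroupOf H' ≤ MulAction.stabilizer H' v := by
    intro k hk
    have hkH : (k : G) ∈ H := (Subgroup.mem_subgroupOf.mp hk).1
    have hfix : (k : G) • v = v := hv _ hkH
    exact MulAction.mem_stabilizer_iff.mpr hfix
  haveI : (MulAction.stabilizer H' v).FiniteIndex := Subgroup.finiteIndex_of_le hst
  haveI : Finite (H' ⧸ MulAction.stabilizer H' v) :=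
    Subgroup.finite_quotient_of_finiteIndex
  haveI : Finite (MulAction.orbit H' v) :=
    Finite.of_equiv _ (MulAction.orbitEquivQuotientStabilizer H' v).symm
  have horbfin : (MulAction.orbit H' v).Finite := Set.toFinite _
  set S : Finset V := horbfin.toFinset with hSdef
  have hmemS : ∀ x, x ∈ S ↔ x ∈ MulAction.orbit H' v := by
    intro x; rw [hSdef, Set.Finite.mem_toFinset]
  have hneS : S.Nonempty := ⟨v, (hmemS v).mpr (MulAction.mem_orbit_self v)⟩
  have hinvS : ∀ g ∈ H', ∀ x ∈ S, g • x ∈ S := by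
    intro g hg x hx
    rw [hmemS] at hx ⊢
    obtain ⟨h, rfl⟩ := hx
    refine ⟨⟨g, hg⟩ * h, ?_⟩
    show (⟨g, hg⟩ * h : H') • v = g • ((h : H') • v)
    rw [mul_smul]; rfl
  set n : ℕ := (S ×ˢ S).sup (fun p => X.dist p.1 p.2) with hndef
  have hboundS : ∀ x ∈ S, ∀ y ∈ S, X.dist x y ≤ n := by
    intro x hx y hy
    have := Finset.le_sup (f := fun p : V × V => X.dist p.1 p.2)
      (Finset.mem_product.mpr ⟨hx, hy⟩ : (x, y) ∈ S ×ˢ S)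
    simpa using this
  exact GTAux.fixed_of_invariant hX H' n S hneS hinvS hboundS
end

section
/- Let X be a G-tree and let H, H' ≤ G be commensurable subgroups. If H contains a hyperbolic element (an element fixing no vertex), then so does H', and the minimal subtrees coincide: the set of vertices v for which there is a hyperbolic h ∈ H with dist(v, h • v) ≤ dist(w, h • w) for all vertices w equals the corresponding set of vertices for H'. -/
open SimpleGraph

section TreeAux

variable {V : Type*} {X : SimpleGraph V}

private lemma getVert_map' {W : Type*} {Y : SimpleGraph W} (f : X →g Y) {u v : V}
    (p : X.Walk u v) (i : ℕ) : (p.map f).getVert i = f (p.getVert i) := by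
  induction p generalizing i with
  | nil => simp [Walk.getVert]
  | cons h q ih =>
    cases i with
    | zero => simp
    | succ n => simpa [Walk.getVert_cons_succ] using ih n

private lemma length_eq_dist_of_isPath [DecidableEq V] (hT : X.IsTree) {u v : V} {p : X.Walk u v}
    (hp : p.IsPath) : p.length = X.dist u v := by
  obtain ⟨q, hq⟩ := hT.isConnected.exists_walk_length_eq_dist u v
  have huniq : (⟨p, hp⟩ : X.Path u v) = ⟨q.bypass, q.bypass_isPath⟩ :=
    hT.IsAcyclic.path_unique _ _
  have hpq : p = q.bypass := congrArg Subtype.val huniq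
  refine le_antisymm ?_ (X.dist_le p)
  rw [hpq, ← hq]
  exact q.length_bypass_le

private lemma dist_getVert_le (hc : X.Connected) {u v : V} (p : X.Walk u v) :
    ∀ i j : ℕ, i ≤ j → X.dist (p.getVert i) (p.getVert j) ≤ j - i := by
  induction p with
  | nil => intro i j _; simp [Walk.getVert, SimpleGraph.dist_self]
  | @cons a b c h q ih =>
    intro i j hij
    cases i with
    | succ n =>
      cases j with
      | zero => omega
      | succ m =>
        simpa [Walk.getVert_cons_succ] using ih n m (by omega)
    | zero =>
      cases j with
      | zero => simp
      | succ m =>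
        have h1 : X.dist a b ≤ 1 := X.dist_le h.toWalk
        have h2 : X.dist b (q.getVert m) ≤ m := by
          simpa using ih 0 m (by omega)
        calc X.dist ((Walk.cons h q).getVert 0) ((Walk.cons h q).getVert (m + 1))
            = X.dist a (q.getVert m) := by simp [Walk.getVert_cons_succ]
          _ ≤ X.dist a b + X.dist b (q.getVert m) := hc.dist_triangle
          _ ≤ m + 1 - 0 := by omega

private lemma support_eq_cons_tail {u v : V} (p : X.Walk u v) :
    p.support = u :: p.support.tail := by
  cases p <;> simp

private lemma one_le_length_of_ne {u v : V} (p : X.Walk u v) (h : u ≠ v) : 1 ≤ p.length := by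
  by_contra hl
  have h0 : p.length ≤ 0 := by omega
  have h2 := p.getVert_of_length_le h0
  rw [p.getVert_zero] at h2
  exact h h2

private lemma append_isPath [DecidableEq V] (hT : X.IsTree) {x y z : V} {r : X.Walk x y} {s : X.Walk y z}
    (hr : r.IsPath) (hs : s.IsPath) (hrl : 1 ≤ r.length) (hsl : 1 ≤ s.length)
    (hne : r.getVert (r.length - 1) ≠ s.getVert 1) : (r.append s).IsPath := by
  rw [Walk.isPath_def, Walk.support_append]
  have hstail : s.support.tail.Nodup := by
    have := hs.support_nodup
    rw [support_eq_cons_tail s] at this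
    exact this.of_cons
  refine List.Nodup.append hr.support_nodup hstail ?_
  intro w hw hw'
  have hws : w ∈ s.support := List.mem_of_mem_tail hw'
  have hwy : w ≠ y := by
    intro hwy
    have := hs.support_nodup
    rw [support_eq_cons_tail s, List.nodup_cons] at this
    exact this.1 (hwy ▸ hw')
  -- unique path from w to y two ways
  set r' := r.dropUntil w hw with hr'def
  set t := s.takeUntil w hws with htdef
  have hr'p : r'.IsPath := hr.dropUntil hw
  have htp : t.IsPath := hs.takeUntil hws
  have hr'l : 1 ≤ r'.length := one_le_length_of_ne r' hwy
  have htl : 1 ≤ t.length := one_le_length_of_ne t (Ne.symm hwy)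
  have huniq : (⟨r', hr'p⟩ : X.Path w y) = ⟨t.reverse, htp.reverse⟩ :=
    hT.IsAcyclic.path_unique _ _
  have heq : r' = t.reverse := congrArg Subtype.val huniq
  -- Claim 1 : r.getVert (r.length - 1) = r'.getVert (r'.length - 1)
  have hspec := r.take_spec hw
  have hlen : (r.takeUntil w hw).length + r'.length = r.length := by
    rw [hr'def, ← Walk.length_append, hspec]
  have hlapp : ((r.takeUntil w hw).append (r.dropUntil w hw)).length
      = (r.takeUntil w hw).length + r'.length := by
    rw [hr'def]; exact Walk.length_append _ _
  have claim1 : r.getVert (r.length - 1) = r'.getVert (r'.length - 1) := by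
    conv_lhs => rw [← hspec]
    rw [Walk.getVert_append, if_neg (by omega)]
    congr 1
    omega
  -- Claim 2 : s.getVert 1 = t.getVert 1 and t.reverse last vert = t.getVert 1
  have hspec2 := s.take_spec hws
  have claim2 : s.getVert 1 = t.getVert 1 := by
    conv_lhs => rw [← hspec2]
    rw [Walk.getVert_append]
    by_cases h1 : 1 < t.length
    · rw [if_pos h1]
    · rw [if_neg h1]
      have ht1 : t.length = 1 := by omega
      have : (s.dropUntil w hws).getVert (1 - t.length) = w := by
        rw [ht1]
        simp
      rw [this]
      have hgl := t.getVert_length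
      rw [ht1] at hgl
      exact hgl.symm
  have claim3 : r'.getVert (r'.length - 1) = t.getVert 1 := by
    rw [heq, Walk.getVert_reverse, Walk.length_reverse]
    congr 1
    omega
  exact hne (claim1.trans (claim3.trans claim2.symm))

end TreeAux

section Main

variable {G : Type*} [Group G] {V : Type*} [MulAction G V] {X : SimpleGraph V}

private def gHom (hX : IsGTree G X) (k : G) : X →g X :=
  ⟨fun x => k • x, fun {a b} h => hX.adj_smul k a b h⟩

private lemma smul_dist [DecidableEq V] (hX : IsGTree G X) (k : G) (x y : V) :
    X.dist (k • x) (k • y) = X.dist x y := by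
  have haux : ∀ (c : G) (a b : V), X.dist (c • a) (c • b) ≤ X.dist a b := by
    intro c a b
    obtain ⟨p, hp⟩ := hX.isTree.isConnected.exists_walk_length_eq_dist a b
    have := X.dist_le (p.map (gHom hX c))
    rwa [Walk.length_map, hp] at this
  refine le_antisymm (haux k x y) ?_
  have := haux k⁻¹ (k • x) (k • y)
  simpa [inv_smul_smul] using this

/-- Translation length additivity along powers, at a minimizer. -/
private lemma dist_pow_smul [DecidableEq V] (hX : IsGTree G X) {g : G} {v : V}
    (hyp : ∀ w : V, g • w ≠ w)
    (hmin : ∀ w : V, X.dist v (g • v) ≤ X.dist w (g • w)) :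
    ∀ n : ℕ, X.dist v (g ^ (n + 1) • v) = (n + 1) * X.dist v (g • v) := by
  have hconn := hX.isTree.isConnected
  have hℓ : 1 ≤ X.dist v (g • v) :=
    hconn.pos_dist_of_ne (fun h => hyp v h.symm)
  obtain ⟨q, hq⟩ := hconn.exists_walk_length_eq_dist v (g • v)
  set p := q.bypass with hpdef
  have hpp : p.IsPath := q.bypass_isPath
  have plen : p.length = X.dist v (g • v) :=
    length_eq_dist_of_isPath hX.isTree hpp
  -- the key no-backtracking claim
  have hkey : p.getVert (p.length - 1) ≠ g • p.getVert 1 := by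
    intro heqkey
    by_cases h1 : p.length = 1
    · have ha : p.getVert 1 = g • v := by
        rw [← h1]; exact p.getVert_length
      have hu : p.getVert (p.length - 1) = v := by
        rw [h1]; exact p.getVert_zero
      have hadj : X.Adj v (g • v) := by
        have := p.adj_getVert_succ (i := 0) (by omega)
        rwa [p.getVert_zero, ha] at this
      refine hX.no_inversions g v (g • v) hadj ⟨rfl, ?_⟩
      rw [hu, ha] at heqkey
      exact heqkey.symm
    · have h2 : 2 ≤ p.length := by omega
      have hd := dist_getVert_le hconn p 1 (p.length - 1) (by omega)
      rw [heqkey] at hd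
      have hge := hmin (p.getVert 1)
      omega
  -- build the concatenated geodesics
  have main : ∀ n : ℕ, ∃ W : X.Walk v (g ^ (n + 1) • v), W.IsPath ∧
      W.length = (n + 1) * p.length ∧
      W.getVert (W.length - 1) = g ^ n • p.getVert (p.length - 1) := by
    intro n
    induction n with
    | zero =>
      refine ⟨p.copy rfl (by rw [pow_one]), ?_, by simp, ?_⟩
      · rwa [Walk.isPath_copy]
      · simp
    | succ n ih =>
      obtain ⟨W, hWp, hWl, hWpen⟩ := ih
      set Pn : X.Walk (g ^ (n + 1) • v) (g ^ (n + 1 + 1) • v) := (p.map (gHom hX (g ^ (n + 1)))).copy (show (gHom hX (g ^ (n + 1))) v = g ^ (n + 1) • v from rfl)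
        (by show g ^ (n + 1) • (g • v) = g ^ (n + 1 + 1) • v
            rw [smul_smul, ← pow_succ]) with hPndef
      have hPnp : Pn.IsPath := by
        rw [hPndef, Walk.isPath_copy]
        exact Walk.map_isPath_of_injective (MulAction.injective (g ^ (n + 1))) hpp
      have hPnl : Pn.length = p.length := by
        rw [hPndef, Walk.length_copy, Walk.length_map]
      have hPn1 : Pn.getVert 1 = g ^ (n + 1) • p.getVert 1 := by
        rw [hPndef, Walk.getVert_copy, getVert_map']
        rfl
      have hPnlast : Pn.getVert (Pn.length - 1) = g ^ (n + 1) • p.getVert (p.length - 1) := by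
        rw [hPndef, Walk.getVert_copy, Walk.length_copy, Walk.length_map, getVert_map']
        rfl
      have hp1 : 1 ≤ p.length := by omega
      have hW1 : 1 ≤ W.length := by
        rw [hWl]
        exact le_trans hp1 (Nat.le_mul_of_pos_left _ (by omega))
      have hPn1len : 1 ≤ Pn.length := by omega
      have hLapp := Walk.length_append W Pn
      refine ⟨W.append Pn, ?_, ?_, ?_⟩
      · refine append_isPath hX.isTree hWp hPnp (by omega) (by omega) ?_
        rw [hWpen, hPn1]
        intro hcon
        apply hkey
        rw [pow_succ, mul_smul] at hcon
        exact MulAction.injective (g ^ n) hcon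
      · rw [Walk.length_append, hWl, hPnl]; ring
      · rw [Walk.getVert_append, if_neg (by omega)]
        have hidx : (W.append Pn).length - 1 - W.length = Pn.length - 1 := by omega
        rw [hidx, hPnlast]
  intro n
  obtain ⟨W, hWp, hWl, -⟩ := main n
  rw [← length_eq_dist_of_isPath hX.isTree hWp, hWl, plen]

/-- Powers of a hyperbolic element are hyperbolic with the same minimizers. -/
private lemma power [DecidableEq V] (hX : IsGTree G X) {g : G} {v : V}
    (hyp : ∀ w : V, g • w ≠ w)
    (hmin : ∀ w : V, X.dist v (g • v) ≤ X.dist w (g • w)) (k : ℕ) (hk : 1 ≤ k) :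
    (∀ w : V, g ^ k • w ≠ w) ∧ ∀ w : V, X.dist v (g ^ k • v) ≤ X.dist w (g ^ k • w) := by
  have hconn := hX.isTree.isConnected
  set ℓ := X.dist v (g • v) with hℓdef
  have hℓ : 1 ≤ ℓ := hconn.pos_dist_of_ne (fun h => hyp v h.symm)
  have M1 : ∀ n : ℕ, 1 ≤ n → X.dist v (g ^ n • v) = n * ℓ := by
    intro n hn
    obtain ⟨m, rfl⟩ : ∃ m, n = m + 1 := ⟨n - 1, by omega⟩
    exact dist_pow_smul hX hyp hmin m
  -- a global minimizer for g ^ k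
  haveI : Nonempty V := ⟨v⟩
  obtain ⟨w, hwmin⟩ : ∃ w : V, ∀ x : V, X.dist w (g ^ k • w) ≤ X.dist x (g ^ k • x) := by
    obtain ⟨x, hx⟩ := Nat.sInf_mem (Set.range_nonempty fun x : V => X.dist x (g ^ k • x))
    refine ⟨x, fun y => ?_⟩
    have h1 : X.dist x (g ^ k • x) = sInf (Set.range fun z : V => X.dist z (g ^ k • z)) := hx
    have h2 : sInf (Set.range fun z : V => X.dist z (g ^ k • z)) ≤ X.dist y (g ^ k • y) :=
      Nat.sInf_le ⟨y, rfl⟩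
    omega
  set m := X.dist w (g ^ k • w) with hmdef
  have tri : ∀ (c : G) (x y : V), X.dist x (c • x) ≤ X.dist y (c • y) + 2 * X.dist x y := by
    intro c x y
    calc X.dist x (c • x) ≤ X.dist x y + X.dist y (c • x) := hconn.dist_triangle
      _ ≤ X.dist x y + (X.dist y (c • y) + X.dist (c • y) (c • x)) := by
          have := hconn.dist_triangle (u := y) (v := c • y) (w := c • x)
          omega
      _ = X.dist y (c • y) + 2 * X.dist x y := by
          rw [smul_dist hX]
          have hcomm : X.dist y x = X.dist x y := SimpleGraph.dist_comm
          omega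
  have hm1 : 1 ≤ m := by
    by_contra hcon
    have h0 : g ^ k • w = w :=
      (hconn.dist_eq_zero_iff.mp (show X.dist w (g ^ k • w) = 0 by omega)).symm
    have hfix : ∀ n : ℕ, g ^ (k * n) • w = w := by
      intro n
      rw [pow_mul]
      induction n with
      | zero => simp
      | succ n ih => rw [pow_succ, mul_smul, h0, ih]
    set C := 2 * X.dist v w with hCdef
    have hn1 : 1 ≤ k * (C + 1) := by
      have := Nat.mul_le_mul hk (show 1 ≤ C + 1 by omega)
      omega
    have h1 := tri (g ^ (k * (C + 1))) v w
    rw [hfix (C + 1), X.dist_self, M1 (k * (C + 1)) hn1] at h1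
    have h2 : C + 1 ≤ k * (C + 1) * ℓ := by
      calc C + 1 = 1 * (C + 1) * 1 := by ring
        _ ≤ k * (C + 1) * ℓ := Nat.mul_le_mul (Nat.mul_le_mul hk le_rfl) hℓ
    omega
  have hypk : ∀ x : V, g ^ k • x ≠ x := by
    intro x hfx
    have := hwmin x
    rw [hfx, X.dist_self] at this
    omega
  -- minimal displacement of g ^ k is k * ℓ
  have M2 : ∀ n : ℕ, 1 ≤ n → X.dist w ((g ^ k) ^ n • w) = n * m := by
    intro n hn
    obtain ⟨j, rfl⟩ : ∃ j, n = j + 1 := ⟨n - 1, by omega⟩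
    exact dist_pow_smul hX hypk hwmin j
  have hmeq : m = k * ℓ := by
    by_contra hne
    set C := 2 * X.dist v w with hCdef
    have hn1 : 1 ≤ k * (C + 1) := by
      have := Nat.mul_le_mul hk (show 1 ≤ C + 1 by omega)
      omega
    have h1 := tri (g ^ (k * (C + 1))) v w
    have h2 := tri (g ^ (k * (C + 1))) w v
    have e1 : X.dist v (g ^ (k * (C + 1)) • v) = k * (C + 1) * ℓ := M1 _ hn1
    have e2 : X.dist w (g ^ (k * (C + 1)) • w) = (C + 1) * m := by
      rw [pow_mul]; exact M2 (C + 1) (by omega)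
    rw [e1, e2] at h1
    have hcm : X.dist w v = X.dist v w := SimpleGraph.dist_comm
    rw [e1, e2, hcm] at h2
    -- h1 : k*(C+1)*ℓ ≤ (C+1)*m + C ; h2 : (C+1)*m ≤ k*(C+1)*ℓ + C
    have hA : k * (C + 1) * ℓ = (C + 1) * (k * ℓ) := by ring
    rw [hA] at h1 h2
    rcases Nat.lt_or_ge m (k * ℓ) with hlt | hge
    · have h4 : (C + 1) * (m + 1) ≤ (C + 1) * (k * ℓ) :=
        Nat.mul_le_mul_left _ (by omega)
      have h6 : (C + 1) * m + (C + 1) ≤ (C + 1) * m + 2 * X.dist v w := by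
        calc (C + 1) * m + (C + 1) = (C + 1) * (m + 1) := by ring
          _ ≤ (C + 1) * (k * ℓ) := h4
          _ ≤ (C + 1) * m + 2 * X.dist v w := h1
      have h7 : C + 1 ≤ 2 * X.dist v w := Nat.le_of_add_le_add_left h6
      omega
    · have hgt : k * ℓ < m := lt_of_le_of_ne hge (fun h => hne h.symm)
      have h4 : (C + 1) * (k * ℓ + 1) ≤ (C + 1) * m :=
        Nat.mul_le_mul_left _ (by omega)
      have h6 : (C + 1) * (k * ℓ) + (C + 1) ≤ (C + 1) * (k * ℓ) + 2 * X.dist v w := by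
        calc (C + 1) * (k * ℓ) + (C + 1) = (C + 1) * (k * ℓ + 1) := by ring
          _ ≤ (C + 1) * m := h4
          _ ≤ (C + 1) * (k * ℓ) + 2 * X.dist v w := h2
      have h7 : C + 1 ≤ 2 * X.dist v w := Nat.le_of_add_le_add_left h6
      omega
  refine ⟨hypk, fun x => ?_⟩
  have hv : X.dist v (g ^ k • v) = m := by rw [M1 k hk, hmeq]
  rw [hv]
  exact hwmin x

end Main

/-- If `H` and `H'` are commensurable subgroups of `G` and `H` contains a hyperbolic
element for the `G`-tree `X`, then so does `H'`, and the minimal subtrees of `H` and `H'`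
(the unions of the axes of their hyperbolic elements) coincide. -/
theorem minimal_subtree_eq_of_commensurable
    (G : Type*) [Group G] (V : Type*) [MulAction G V] (X : SimpleGraph V)
    (hX : IsGTree G X)
    (H H' : Subgroup G)
    (hcomm₁ : ((H ⊓ H').subgroupOf H).FiniteIndex)
    (hcomm₂ : ((H ⊓ H').subgroupOf H').FiniteIndex)
    (hhyp : ∃ h ∈ H, ∀ v : V, h • v ≠ v) :
    (∃ h' ∈ H', ∀ v : V, h' • v ≠ v) ∧
    {v : V | ∃ h ∈ H, (∀ u : V, h • u ≠ u) ∧ ∀ w : V, X.dist v (h • v) ≤ X.dist w (h • w)}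
      = {v : V | ∃ h ∈ H', (∀ u : V, h • u ≠ u) ∧
          ∀ w : V, X.dist v (h • v) ≤ X.dist w (h • w)} := by
  classical
  by_cases hV : Nonempty V
  case neg =>
    refine ⟨⟨1, H'.one_mem, fun w => absurd ⟨w⟩ hV⟩, ?_⟩
    ext w
    exact absurd ⟨w⟩ hV
  case pos =>
  haveI := hV
  have transfer : ∀ (A B : Subgroup G), ((A ⊓ B).subgroupOf A).FiniteIndex →
      ∀ h ∈ A, (∀ u : V, h • u ≠ u) → ∀ v : V,
      (∀ w : V, X.dist v (h • v) ≤ X.dist w (h • w)) →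
      ∃ h' ∈ B, (∀ u : V, h' • u ≠ u) ∧ ∀ w : V, X.dist v (h' • v) ≤ X.dist w (h' • w) := by
    intro A B hidx h hA hyp v hmin
    obtain ⟨n, hn0, -, hmem⟩ :=
      Subgroup.exists_pow_mem_of_index_ne_zero hidx.index_ne_zero (⟨h, hA⟩ : A)
    rw [Subgroup.mem_subgroupOf] at hmem
    have hcoe : (((⟨h, hA⟩ : A) ^ n : A) : G) = h ^ n := by
      push_cast
      rfl
    rw [hcoe, Subgroup.mem_inf] at hmem
    obtain ⟨hypk, hmink⟩ := power hX hyp hmin n (by omega)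
    exact ⟨h ^ n, hmem.2, hypk, hmink⟩
  constructor
  · obtain ⟨h, hH, hyp⟩ := hhyp
    obtain ⟨x, hx⟩ := Nat.sInf_mem (Set.range_nonempty fun x : V => X.dist x (h • x))
    have hxmin : ∀ w : V, X.dist x (h • x) ≤ X.dist w (h • w) := by
      intro w
      have h1 : X.dist x (h • x) = sInf (Set.range fun z : V => X.dist z (h • z)) := hx
      have h2 : sInf (Set.range fun z : V => X.dist z (h • z)) ≤ X.dist w (h • w) :=
        Nat.sInf_le ⟨w, rfl⟩
      omega
    obtain ⟨h', hmem, hyp', -⟩ := transfer H H' hcomm₁ h hH hyp x hxmin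
    exact ⟨h', hmem, hyp'⟩
  · ext v
    simp only [Set.mem_setOf_eq]
    constructor
    · rintro ⟨h, hH, hyp, hmin⟩
      exact transfer H H' hcomm₁ h hH hyp v hmin
    · rintro ⟨h, hH', hyp, hmin⟩
      have hidx : ((H' ⊓ H).subgroupOf H').FiniteIndex := by
        rwa [inf_comm] at hcomm₂
      exact transfer H' H hidx h hH' hyp v hmin
end

section
/- Let X and Y be cocompact G-trees with the same elliptic subgroups (a subgroup of G fixes a vertex of X if and only if it fixes a vertex of Y; equivalently, X and Y lie in the same deformation space). If X contains a nonempty G-invariant set S of vertices whose induced subgraph is connected and locally finite (every vertex of S has only finitely many neighbors lying in S), then Y also contains a G-invariant subtree whose induced subgraph is locally finite. -/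
namespace GTAux
open SimpleGraph

variable {V : Type*} {T : SimpleGraph V}

noncomputable local instance : DecidableEq V := Classical.decEq V

/-- getVert is injective (below length) on paths. -/
lemma getVert_inj {u v : V} {p : T.Walk u v} (hp : p.IsPath) :
    ∀ {i j : ℕ}, i ≤ p.length → j ≤ p.length → p.getVert i = p.getVert j → i = j := by
  induction p with
  | nil => intro i j hi hj _; simp at hi hj; omega
  | @cons u w v h q ih =>
    rw [Walk.cons_isPath_iff] at hp
    intro i j hi hj hij
    match i, j with
    | 0, 0 => rfl
    | 0, (k+1) =>
      exfalso
      rw [Walk.getVert_zero, Walk.getVert_cons_succ] at hij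
      exact hp.2 (Walk.mem_support_iff_exists_getVert.mpr
        ⟨k, hij.symm, by simpa using Nat.succ_le_succ_iff.mp hj⟩)
    | (k+1), 0 =>
      exfalso
      rw [Walk.getVert_zero, Walk.getVert_cons_succ] at hij
      exact hp.2 (Walk.mem_support_iff_exists_getVert.mpr
        ⟨k, hij, by simpa using Nat.succ_le_succ_iff.mp hi⟩)
    | (k+1), (l+1) =>
      rw [Walk.getVert_cons_succ, Walk.getVert_cons_succ] at hij
      have := ih hp.1 (by simpa using Nat.succ_le_succ_iff.mp hi)
        (by simpa using Nat.succ_le_succ_iff.mp hj) hij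
      omega

/-- Splitting a walk at index `i`. -/
lemma exists_split {u v : V} (p : T.Walk u v) :
    ∀ (i : ℕ), i ≤ p.length → ∃ (q : T.Walk u (p.getVert i)) (r : T.Walk (p.getVert i) v),
      q.length = i ∧ r.length = p.length - i := by
  induction p with
  | nil =>
    intro i hi
    simp only [Walk.length_nil, Nat.le_zero] at hi
    subst hi
    exact ⟨Walk.nil, Walk.nil, rfl, rfl⟩
  | @cons u w v h q ih =>
    intro i hi
    match i with
    | 0 =>
      exact ⟨Walk.nil.copy rfl (Walk.getVert_zero _).symm,
        ((q.cons h).copy (Walk.getVert_zero _).symm rfl), by simp, by simp⟩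
    | (k+1) =>
      obtain ⟨q', r', hq', hr'⟩ := ih k (by simpa using Nat.succ_le_succ_iff.mp hi)
      refine ⟨(q'.cons h).copy rfl (Walk.getVert_cons_succ _ _).symm,
        r'.copy (Walk.getVert_cons_succ _ _).symm rfl, by simp [hq'], by simp [hr']⟩

lemma dist_getVert_le {u v : V} (p : T.Walk u v) {i : ℕ} (hi : i ≤ p.length) :
    T.dist u (p.getVert i) ≤ i := by
  obtain ⟨q, r, hq, hr⟩ := exists_split p i hi
  simpa [hq] using T.dist_le q

lemma dist_getVert_right_le {u v : V} (p : T.Walk u v) {i : ℕ} (hi : i ≤ p.length) :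
    T.dist (p.getVert i) v ≤ p.length - i := by
  obtain ⟨q, r, hq, hr⟩ := exists_split p i hi
  simpa [hr] using T.dist_le r

/-- Any vertex on a walk to `x` is at distance at most the walk's length from `x`. -/
lemma dist_le_of_mem_support {a x y : V} (p : T.Walk a x) (hy : y ∈ p.support) :
    T.dist y x ≤ p.length := by
  have h := T.dist_le (p.dropUntil y hy)
  calc T.dist y x ≤ (p.dropUntil y hy).length := h
    _ ≤ p.length := Walk.length_dropUntil_le p hy

/-- In an acyclic graph every path realizes the distance. -/
lemma isPath_length_eq_dist (ha : T.IsAcyclic) {u v : V} (p : T.Walk u v) (hp : p.IsPath) :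
    p.length = T.dist u v := by
  obtain ⟨q, hq, hlen⟩ := (Walk.reachable p).exists_path_of_dist
  have : (⟨p, hp⟩ : T.Path u v) = ⟨q, hq⟩ := ha.path_unique _ _
  rw [show p = q from congrArg Subtype.val this, hlen]

/-- Tree step lemma: the distance to a fixed vertex changes by exactly one along an edge. -/
lemma tree_step (ha : T.IsAcyclic) (hc : T.Connected) {a b x : V} (hab : T.Adj a b) :
    T.dist b x = T.dist a x + 1 ∨ T.dist a x = T.dist b x + 1 := by
  have key : ∀ {a b : V}, T.Adj a b →
      T.dist b x = T.dist a x + 1 ∨ T.dist b x < T.dist a x := by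
    intro a b hab
    obtain ⟨p, hp, hlen⟩ := (hc.preconnected a x).exists_path_of_dist
    by_cases hb : b ∈ p.support
    · right
      have hba : b ≠ a := (T.ne_of_adj hab.symm)
      have hsplit := p.take_spec hb
      have hlen2 : (p.takeUntil b hb).length + (p.dropUntil b hb).length = p.length := by
        have h2 := congrArg Walk.length hsplit
        rwa [Walk.length_append] at h2
      have h1 : 1 ≤ (p.takeUntil b hb).length := by
        by_contra hcon
        push_neg at hcon
        interval_cases h : (p.takeUntil b hb).length
        exact hba (Walk.eq_of_length_eq_zero h).symm
      have := T.dist_le (p.dropUntil b hb)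
      omega
    · left
      have hcons : (p.cons hab.symm).IsPath := hp.cons hb
      have := isPath_length_eq_dist ha _ hcons
      simp only [Walk.length_cons] at this
      omega
  rcases key hab with h1 | h2
  · exact Or.inl h1
  · rcases key hab.symm with h3 | h4
    · exact Or.inr h3
    · omega

/-- Tree "unique parent" lemma: two neighbours of `b` that are both strictly closer
to `x` coincide. -/
lemma tree_parent (ha : T.IsAcyclic) (hc : T.Connected) {a b c x : V}
    (hba : T.Adj b a) (hbc : T.Adj b c)
    (hda : T.dist a x + 1 = T.dist b x) (hdc : T.dist c x + 1 = T.dist b x) : a = c := by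
  have build : ∀ {y : V}, (hby : T.Adj b y) → T.dist y x + 1 = T.dist b x →
      ∃ (q : T.Walk b x), q.IsPath ∧ q.getVert 1 = y := by
    intro y hby hdy
    obtain ⟨p, hp, hlen⟩ := (hc.preconnected y x).exists_path_of_dist
    have hbp : b ∉ p.support := by
      intro hb
      have := dist_le_of_mem_support p hb
      omega
    refine ⟨p.cons hby, hp.cons hbp, ?_⟩
    simpa using Walk.getVert_cons_one p hby
  obtain ⟨q1, hq1, hg1⟩ := build hba hda
  obtain ⟨q2, hq2, hg2⟩ := build hbc hdc
  have : (⟨q1, hq1⟩ : T.Path b x) = ⟨q2, hq2⟩ := ha.path_unique _ _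
  have hq : q1 = q2 := congrArg Subtype.val this
  rw [← hg1, ← hg2, hq]

/-- If an automorphism fixes the endpoints of a path in an acyclic graph,
it fixes the path pointwise. -/
lemma fix_path (ha : T.IsAcyclic) (e : T ≃g T) {u v : V} (hu : e u = u) (hv : e v = v)
    (p : T.Walk u v) (hp : p.IsPath) : ∀ y ∈ p.support, e y = y := by
  have hmap : ((p.map e.toHom).copy hu hv).IsPath := by
    rw [Walk.isPath_copy]
    exact Walk.map_isPath_of_injective e.injective hp
  have : (⟨(p.map e.toHom).copy hu hv, hmap⟩ : T.Path u v) = ⟨p, hp⟩ := ha.path_unique _ _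
  have hq : (p.map e.toHom).copy hu hv = p := congrArg Subtype.val this
  have hs : p.support.map e = p.support := by
    have := congrArg Walk.support hq
    rwa [Walk.support_copy, Walk.support_map] at this
  intro y hy
  -- from List.map e support = support and nodup-free argument:
  have : ∀ (l : List V), l.map e = l → ∀ y ∈ l, e y = y := by
    intro l
    induction l with
    | nil => intro _ y hy; simp at hy
    | cons a l ih =>
      intro h y hy
      simp only [List.map_cons, List.cons.injEq] at h
      rcases List.mem_cons.mp hy with rfl | hy'
      · exact h.1
      · exact ih h.2 y hy'
  exact this p.support hs y hy

/-- A walk whose support lies in `U` gives reachability in the induced graph. -/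
lemma reachable_induce_of_walk {U : Set V} {u v : V} (p : T.Walk u v)
    (hsup : ∀ x ∈ p.support, x ∈ U) (hu : u ∈ U) (hv : v ∈ U) :
    (T.induce U).Reachable ⟨u, hu⟩ ⟨v, hv⟩ := by
  induction p with
  | nil => rfl
  | @cons a b c h q ih =>
    have hb : b ∈ U := hsup b (by simp)
    have : (T.induce U).Adj ⟨a, hu⟩ ⟨b, hb⟩ := h
    exact (Adj.reachable this).trans (ih (fun x hx => hsup x (by simp [hx])) hb hv)

/-- Mapping a walk along a graph hom gives a distance bound. -/
lemma dist_map_le {W : Type*} {T' : SimpleGraph W} (f : T →g T') {u v : V} (p : T.Walk u v) :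
    T'.dist (f u) (f v) ≤ p.length := by
  have := T'.dist_le (p.map f)
  rwa [Walk.length_map] at this

lemma dist_iso {W : Type*} {T' : SimpleGraph W} (e : T ≃g T') (hc : T.Connected) (u v : V) :
    T'.dist (e u) (e v) = T.dist u v := by
  obtain ⟨p, hp, hlen⟩ := (hc.preconnected u v).exists_path_of_dist
  refine le_antisymm (hlen ▸ dist_map_le e.toHom p) ?_
  obtain ⟨q, hq, hlenq⟩ := ((hc.preconnected u v).map e.toHom).exists_path_of_dist
  have := dist_map_le e.symm.toHom q
  simpa [hlenq] using this

/-- Every vertex of a nonnil walk lies on one of its edges. -/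
lemma mem_edge_of_mem_support {u v y : V} (p : T.Walk u v) (hy : y ∈ p.support)
    (hnn : p.length ≠ 0) : ∃ e ∈ p.edges, y ∈ e := by
  induction p with
  | nil => simp at hnn
  | @cons a b c h q ih =>
    rcases List.mem_cons.mp (by simpa using hy) with rfl | hy'
    · exact ⟨s(y, b), by simp, by simp⟩
    · by_cases hq0 : q.length = 0
      · cases q with
        | nil =>
          have hyb : y = b := by simpa using hy'
          subst hyb
          exact ⟨s(a, y), by simp, by simp⟩
        | cons h' q' => simp at hq0
      · obtain ⟨e, he, hye⟩ := ih hy' hq0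
        exact ⟨e, by simp [he], hye⟩

end GTAux

namespace GTAux2
open SimpleGraph

variable {G : Type*} [Group G] {V : Type*} [MulAction G V]

/-- The graph automorphism given by the action of `g`. -/
def actIso (T : SimpleGraph V)
    (hadj : ∀ (g : G) (u v : V), T.Adj u v → T.Adj (g • u) (g • v)) (g : G) : T ≃g T where
  toEquiv := MulAction.toPerm g
  map_rel_iff' := by
    intro u v
    constructor
    · intro h
      have := hadj g⁻¹ _ _ h
      simpa using this
    · exact hadj g u v

@[simp] lemma actIso_apply (T : SimpleGraph V) (hadj) (g : G) (v : V) :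
    actIso T hadj g v = g • v := rfl

lemma dist_smul (T : SimpleGraph V)
    (hadj : ∀ (g : G) (u v : V), T.Adj u v → T.Adj (g • u) (g • v))
    (hc : T.Connected) (g : G) (u v : V) : T.dist (g • u) (g • v) = T.dist u v :=
  GTAux.dist_iso (actIso T hadj g) hc u v

/-- The automorphism of the induced graph on an invariant set. -/
def actIsoInduce (T : SimpleGraph V) {S : Set V}
    (hadj : ∀ (g : G) (u v : V), T.Adj u v → T.Adj (g • u) (g • v))
    (hS : ∀ (g : G), ∀ v ∈ S, g • v ∈ S) (g : G) : (T.induce S) ≃g (T.induce S) where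
  toEquiv :=
    { toFun := fun s => ⟨g • (s : V), hS g s s.2⟩
      invFun := fun s => ⟨g⁻¹ • (s : V), hS g⁻¹ s s.2⟩
      left_inv := fun s => Subtype.ext (by simp)
      right_inv := fun s => Subtype.ext (by simp) }
  map_rel_iff' := by
    intro u v
    simp only [comap_adj, Equiv.coe_fn_mk, Function.Embedding.coe_subtype]
    constructor
    · intro h
      have := hadj g⁻¹ _ _ h
      simpa using this
    · exact hadj g _ _

@[simp] lemma actIsoInduce_apply (T : SimpleGraph V) {S : Set V} (hadj) (hS) (g : G) (s : ↥S) :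
    (actIsoInduce T hadj hS g s : V) = g • (s : V) := rfl

/-- Finite relative index gives a finite orbit. -/
lemma finite_orbit_of_relindex {β : Type*} [MulAction G β] {A : Subgroup G} {b : β}
    (h : (MulAction.stabilizer G b).relIndex A ≠ 0) :
    {y : β | ∃ g ∈ A, g • b = y}.Finite := by
  haveI hfin : Finite (A ⧸ (MulAction.stabilizer G b).subgroupOf A) := by
    refine Nat.finite_of_card_ne_zero ?_
    rwa [← Subgroup.index_eq_card]
  have hsurj : Function.Surjective
      (Quotient.lift (fun a : A => (⟨(a : G) • b, ⟨a, a.2, rfl⟩⟩ : {y : β | ∃ g ∈ A, g • b = y}))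
        (fun a a' (hr : _) => ?_) :
        A ⧸ (MulAction.stabilizer G b).subgroupOf A → {y : β | ∃ g ∈ A, g • b = y}) := ?_
  · exact Set.finite_coe_iff.mp (Finite.of_surjective _ hsurj)
  · -- respects the relation
    have hr' := (QuotientGroup.leftRel_apply).mp hr
    rw [Subgroup.mem_subgroupOf] at hr'
    have : ((a⁻¹ * a' : A) : G) • b = b := hr'
    refine Subtype.ext ?_
    have hb : ((a : G)⁻¹ * (a' : G)) • b = b := this
    have := congrArg (fun y => (a : G) • y) hb
    simpa [mul_smul] using this.symm
  · rintro ⟨y, g, hg, rfl⟩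
    exact ⟨QuotientGroup.mk (⟨g, hg⟩ : A), rfl⟩

/-- Conversely, a finite orbit gives finite relative index. -/
lemma relindex_of_finite_orbit {β : Type*} [MulAction G β] {A : Subgroup G} {b : β}
    (h : {y : β | ∃ g ∈ A, g • b = y}.Finite) :
    (MulAction.stabilizer G b).relIndex A ≠ 0 := by
  haveI := h.to_subtype
  have hinj : Function.Injective
      (Quotient.lift (fun a : A => (⟨(a : G) • b, ⟨a, a.2, rfl⟩⟩ : {y : β | ∃ g ∈ A, g • b = y}))
        (fun a a' (hr : _) => ?_) :
        A ⧸ (MulAction.stabilizer G b).subgroupOf A → {y : β | ∃ g ∈ A, g • b = y}) := ?_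
  · haveI : Finite (A ⧸ (MulAction.stabilizer G b).subgroupOf A) := Finite.of_injective _ hinj
    rw [Subgroup.relIndex, Subgroup.index_eq_card]
    exact Nat.card_ne_zero.mpr ⟨⟨QuotientGroup.mk 1⟩, inferInstance⟩
  · have hr' := (QuotientGroup.leftRel_apply).mp hr
    rw [Subgroup.mem_subgroupOf] at hr'
    have hb : ((a : G)⁻¹ * (a' : G)) • b = b := hr'
    have := congrArg (fun y => (a : G) • y) hb
    refine Subtype.ext ?_
    simpa [mul_smul] using this.symm
  · intro q q'
    induction q using Quotient.inductionOn with | _ a =>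
    induction q' using Quotient.inductionOn with | _ a' =>
    intro hqq
    have hab : (a : G) • b = (a' : G) • b := congrArg Subtype.val hqq
    have hmem : (a⁻¹ * a' : A) ∈ (MulAction.stabilizer G b).subgroupOf A := by
      rw [Subgroup.mem_subgroupOf]
      show ((a : G)⁻¹ * (a' : G)) ∈ MulAction.stabilizer G b
      rw [MulAction.mem_stabilizer_iff, mul_smul, ← hab]
      simp
    exact Quotient.sound ((QuotientGroup.leftRel_apply).mpr hmem)

end GTAux2

namespace GTAux3
open SimpleGraph GTAux GTAux2

variable {G : Type*} [Group G] {V : Type*} [MulAction G V]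

/-- Projection to an invariant subtree: a subgroup fixing a vertex fixes a vertex of any
invariant connected subset. -/
lemma exists_fixed_in_subtree {X : SimpleGraph V} (ha : X.IsAcyclic) (hc : X.Connected)
    (hadj : ∀ (g : G) (u v : V), X.Adj u v → X.Adj (g • u) (g • v))
    {S : Set V} (hne : S.Nonempty) (hSinv : ∀ (g : G), ∀ v ∈ S, g • v ∈ S)
    (hScon : (X.induce S).Connected)
    {H : Subgroup G} {x : V} (hfix : ∀ h ∈ H, h • x = x) :
    ∃ p ∈ S, ∀ h ∈ H, h • p = p := by
  classical
  set D : Set ℕ := {n | ∃ s ∈ S, X.dist s x = n} with hD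
  have hDne : D.Nonempty := ⟨X.dist hne.choose x, hne.choose, hne.choose_spec, rfl⟩
  set m := sInf D with hm
  obtain ⟨p, hpS, hpm⟩ : ∃ s ∈ S, X.dist s x = m := Nat.sInf_mem hDne
  have hlow : ∀ s ∈ S, m ≤ X.dist s x := fun s hs => Nat.sInf_le ⟨s, hs, rfl⟩
  -- uniqueness of closest point
  have huniq : ∀ q ∈ S, X.dist q x = m → q = p := by
    intro q hqS hqm
    by_contra hne'
    obtain ⟨r⟩ := hScon.preconnected ⟨p, hpS⟩ ⟨q, hqS⟩
    set W := r.bypass with hW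
    have hWp : W.IsPath := r.bypass_isPath
    set n := W.length with hn
    have hn0 : n ≠ 0 := by
      intro h0
      have := Walk.eq_of_length_eq_zero (hn ▸ h0)
      exact hne' (congrArg Subtype.val this).symm
    set f : ℕ → ℕ := fun i => X.dist ((W.getVert i : ↥S) : V) x with hf
    have hf0 : f 0 = m := by simp [hf, Walk.getVert_zero, hpm]
    have hfn : f n = m := by simp [hf, hn, Walk.getVert_length, hqm]
    have hflow : ∀ i, m ≤ f i := fun i => hlow _ (W.getVert i).2
    have hstep : ∀ i < n, f (i + 1) = f i + 1 ∨ f i = f (i + 1) + 1 := by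
      intro i hi
      have hadjΓ : (X.induce S).Adj (W.getVert i) (W.getVert (i + 1)) :=
        W.adj_getVert_succ (hn ▸ hi)
      have hadjX : X.Adj ((W.getVert i : ↥S) : V) ((W.getVert (i + 1) : ↥S) : V) := hadjΓ
      have := tree_step ha hc (x := x) hadjX
      tauto
    -- maximum of f on range (n+1)
    set M := (Finset.range (n + 1)).sup f with hM
    have hfM : ∀ i ≤ n, f i ≤ M := fun i hi =>
      Finset.le_sup (Finset.mem_range.mpr (Nat.lt_succ_of_le hi))
    obtain ⟨j, hjmem, hjM⟩ := Finset.exists_mem_eq_sup (Finset.range (n + 1))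
      ⟨0, Finset.mem_range.mpr (Nat.succ_pos n)⟩ f
    have hMgt : m < M := by
      rcases Nat.lt_or_ge m M with h | h
      · exact h
      · exfalso
        have h1 : f 1 = m := le_antisymm (le_trans (hfM 1 (Nat.one_le_iff_ne_zero.mpr hn0)) h)
          (hflow 1)
        have h2 := hstep 0 (Nat.pos_of_ne_zero hn0)
        rw [Nat.zero_add] at h2
        omega
    have hex : ∃ i, f i = M ∧ i ≤ n := ⟨j, hjM.symm, Nat.lt_succ_iff.mp (Finset.mem_range.mp hjmem)⟩
    set i0 := Nat.find hex with hi0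
    have hspec := Nat.find_spec hex
    rw [← hi0] at hspec
    obtain ⟨hi0M, hi0n⟩ := hspec
    have hi0pos : i0 ≠ 0 := by
      intro h0
      rw [h0] at hi0M
      omega
    have hi0ltn : i0 < n := by
      rcases Nat.lt_or_ge i0 n with h | h
      · exact h
      · exfalso
        have : i0 = n := le_antisymm hi0n h
        rw [this] at hi0M
        omega
    have hprev : f (i0 - 1) = f i0 - 1 ∧ f (i0 - 1) + 1 = f i0 := by
      have hlt : i0 - 1 < i0 := Nat.sub_lt (Nat.pos_of_ne_zero hi0pos) Nat.one_pos
      have hne2 : ¬(f (i0 - 1) = M ∧ i0 - 1 ≤ n) := Nat.find_min hex (hi0 ▸ hlt)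
      have hle : f (i0 - 1) ≤ M := hfM _ (le_trans (Nat.sub_le _ _) hi0n)
      have hstep' := hstep (i0 - 1) (lt_of_le_of_lt (Nat.sub_le _ _) hi0ltn)
      rw [Nat.sub_add_cancel (Nat.pos_of_ne_zero hi0pos)] at hstep'
      have : f (i0 - 1) ≠ M := fun hcon => hne2 ⟨hcon, le_trans (Nat.sub_le _ _) hi0n⟩
      omega
    have hnext : f (i0 + 1) + 1 = f i0 := by
      have hle : f (i0 + 1) ≤ M := hfM _ hi0ltn
      have hstep' := hstep i0 hi0ltn
      omega
    -- apply the unique parent lemma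
    have hadjba : X.Adj ((W.getVert i0 : ↥S) : V) ((W.getVert (i0 - 1) : ↥S) : V) := by
      have : (X.induce S).Adj (W.getVert (i0 - 1)) (W.getVert (i0 - 1 + 1)) :=
        W.adj_getVert_succ (by omega)
      rw [Nat.sub_add_cancel (Nat.pos_of_ne_zero hi0pos)] at this
      exact (this : X.Adj _ _).symm
    have hadjbc : X.Adj ((W.getVert i0 : ↥S) : V) ((W.getVert (i0 + 1) : ↥S) : V) := by
      have : (X.induce S).Adj (W.getVert i0) (W.getVert (i0 + 1)) :=
        W.adj_getVert_succ hi0ltn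
      exact this
    have heq : ((W.getVert (i0 - 1) : ↥S) : V) = ((W.getVert (i0 + 1) : ↥S) : V) := by
      exact tree_parent ha hc hadjba hadjbc hprev.2 hnext
    have heq2 : W.getVert (i0 - 1) = W.getVert (i0 + 1) := Subtype.ext heq
    have := getVert_inj hWp (by omega : i0 - 1 ≤ W.length) (by omega : i0 + 1 ≤ W.length) heq2
    omega
  refine ⟨p, hpS, fun h hh => ?_⟩
  refine huniq (h • p) (hSinv h p hpS) ?_
  have hx2 : X.dist (h • p) x = X.dist (h • p) (h • x) := by rw [hfix h hh]
  rw [hx2, dist_smul X hadj hc, hpm]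

end GTAux3

namespace GTAux4
open SimpleGraph GTAux GTAux2

variable {G : Type*} [Group G] {V : Type*} [MulAction G V]

/-- Generation lemma: if `G` acts on a graph with an invariant, connected, locally finite
set `S` of vertices, cocompactly, then `G` is generated by the stabilizer of a base vertex
together with a finite set. -/
lemma exists_finite_generating_set {X : SimpleGraph V} {S : Set V}
    (hadj : ∀ (g : G) (u v : V), X.Adj u v → X.Adj (g • u) (g • v))
    (hSinv : ∀ (g : G), ∀ v ∈ S, g • v ∈ S)
    (hScon : (X.induce S).Connected)
    (hloc : ∀ v ∈ S, {w ∈ S | X.Adj v w}.Finite)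
    (hcc : Finite (Quotient (MulAction.orbitRel G V)))
    {v0 : V} (hv0 : v0 ∈ S) :
    ∃ F : Set G, F.Finite ∧
      Subgroup.closure ((MulAction.stabilizer G v0 : Set G) ∪ F) = ⊤ := by
  classical
  set Γ := X.induce S with hΓ
  set v0' : ↥S := ⟨v0, hv0⟩ with hv0'
  have hdistΓ : ∀ (g : G) (u v : ↥S),
      Γ.dist (actIsoInduce X hadj hSinv g u) (actIsoInduce X hadj hSinv g v) = Γ.dist u v :=
    fun g u v => GTAux.dist_iso (actIsoInduce X hadj hSinv g) hScon u v
  -- balls in Γ around v0' are finite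
  have hball : ∀ n : ℕ, {s : ↥S | Γ.dist v0' s ≤ n}.Finite := by
    intro n
    induction n with
    | zero =>
      refine Set.Finite.subset (Set.finite_singleton v0') ?_
      intro s hs
      simp only [Set.mem_setOf_eq, Nat.le_zero] at hs
      have := (hScon.dist_eq_zero_iff (u := v0') (v := s)).mp hs
      simp [this]
    | succ n ih =>
      have hsub : {s : ↥S | Γ.dist v0' s ≤ n + 1} ⊆
          {s : ↥S | Γ.dist v0' s ≤ n} ∪ ⋃ t ∈ {s : ↥S | Γ.dist v0' s ≤ n}, {s : ↥S | Γ.Adj t s} := by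
        intro s hs
        simp only [Set.mem_setOf_eq] at hs
        rcases Nat.lt_or_ge (Γ.dist v0' s) (n + 1) with h | h
        · exact Or.inl (Nat.lt_succ_iff.mp h)
        · have hd : Γ.dist v0' s = n + 1 := le_antisymm hs h
          obtain ⟨p, hp, hlen⟩ := (hScon.preconnected v0' s).exists_path_of_dist
          rw [hd] at hlen
          right
          cases hrev : p.reverse with
          | nil =>
            exfalso
            have := congrArg Walk.length hrev
            simp [hlen] at this
          | @cons _ t _ h' q =>
            have hq : q.length = n := by
              have := congrArg Walk.length hrev
              simp [hlen] at this
              omega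
            have htB : t ∈ {s : ↥S | Γ.dist v0' s ≤ n} := by
              simp only [Set.mem_setOf_eq]
              have hcomm : Γ.dist v0' t = Γ.dist t v0' := SimpleGraph.dist_comm
              rw [hcomm]
              exact le_trans (Γ.dist_le q) (le_of_eq hq)
            exact Set.mem_biUnion htB h'.symm
      refine Set.Finite.subset (Set.Finite.union ih (Set.Finite.biUnion ih ?_)) hsub
      intro t _
      have : {s : ↥S | Γ.Adj t s} = Subtype.val ⁻¹' {w ∈ S | X.Adj ↑t w} := by
        ext s
        simp only [Set.mem_setOf_eq, Set.mem_preimage, Set.mem_sep_iff]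
        exact ⟨fun h => ⟨s.2, h⟩, fun h => h.2⟩
      rw [this]
      exact Set.Finite.preimage (Set.injOn_of_injective Subtype.val_injective) (hloc ↑t t.2)
  -- density: every vertex of S is within a bounded distance of the orbit of v0'
  have hsec : ∀ c : Quotient (MulAction.orbitRel G V), ∃ s : ↥S,
      (∃ t : ↥S, Quotient.mk (MulAction.orbitRel G V) (t : V) = c) →
        Quotient.mk (MulAction.orbitRel G V) (s : V) = c := by
    intro c
    by_cases h : ∃ t : ↥S, Quotient.mk (MulAction.orbitRel G V) (t : V) = c
    · exact ⟨h.choose, fun _ => h.choose_spec⟩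
    · exact ⟨v0', fun hh => absurd hh h⟩
  choose sec hsecspec using hsec
  obtain ⟨N, hN⟩ : ∃ N : ℕ, ∀ c, Γ.dist v0' (sec c) ≤ N :=
    Finite.exists_le fun c => Γ.dist v0' (sec c)
  have hdense : ∀ s : ↥S, ∃ g : G, Γ.dist ⟨g • v0, hSinv g v0 hv0⟩ s ≤ N := by
    intro s
    set c := Quotient.mk (MulAction.orbitRel G V) (s : V) with hc
    have hts := hsecspec c ⟨s, rfl⟩
    have : MulAction.orbitRel G V (sec c : V) (s : V) := Quotient.exact hts
    rw [MulAction.orbitRel_apply] at this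
    obtain ⟨g, hg⟩ := this
    refine ⟨g⁻¹, ?_⟩
    have h1 : (⟨g⁻¹ • v0, hSinv g⁻¹ v0 hv0⟩ : ↥S) = actIsoInduce X hadj hSinv g⁻¹ v0' := rfl
    rw [h1]
    have hgsec : (actIsoInduce X hadj hSinv g⁻¹ (sec c)) = s := by
      refine Subtype.ext ?_
      show g⁻¹ • ((sec c : V)) = (s : V)
      rw [← hg]
      simp
    rw [← hgsec, hdistΓ]
    exact hN c
  -- the set of small translations generates G
  set T : Set G := {g : G | Γ.dist v0' ⟨g • v0, hSinv g v0 hv0⟩ ≤ 2 * N + 1} with hT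
  have hTgen : ∀ g : G, g ∈ Subgroup.closure T := by
    have main : ∀ D : ℕ, ∀ g : G, Γ.dist v0' ⟨g • v0, hSinv g v0 hv0⟩ = D →
        g ∈ Subgroup.closure T := by
      intro D
      induction D using Nat.strong_induction_on with
      | _ D ih =>
        intro g hD
        rcases Nat.lt_or_ge (2 * N + 1) D with hbig | hsmall
        · -- D > 2N+1
          obtain ⟨p, hp, hlen⟩ :=
            (hScon.preconnected v0' ⟨g • v0, hSinv g v0 hv0⟩).exists_path_of_dist
          rw [hD] at hlen
          set s := p.getVert (N + 1) with hs
          have hd1 : Γ.dist v0' s ≤ N + 1 := by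
            have := dist_getVert_le p (i := N + 1) (by omega)
            simpa [hs] using this
          have hd2 : Γ.dist s ⟨g • v0, hSinv g v0 hv0⟩ ≤ D - (N + 1) := by
            have := dist_getVert_right_le p (i := N + 1) (by omega)
            rw [hlen] at this
            simpa [hs] using this
          obtain ⟨g1, hg1⟩ := hdense s
          have hg1T : g1 ∈ T := by
            have htri := hScon.dist_triangle (u := v0') (v := s) (w := ⟨g1 • v0, hSinv g1 v0 hv0⟩)
            have hcomm : Γ.dist s ⟨g1 • v0, hSinv g1 v0 hv0⟩
                = Γ.dist ⟨g1 • v0, hSinv g1 v0 hv0⟩ s := SimpleGraph.dist_comm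
            simp only [hT, Set.mem_setOf_eq]
            omega
          have hrest : Γ.dist v0' ⟨(g1⁻¹ * g) • v0, hSinv _ v0 hv0⟩ ≤ D - 1 := by
            have he1 : (⟨(g1⁻¹ * g) • v0, hSinv _ v0 hv0⟩ : ↥S)
                = actIsoInduce X hadj hSinv g1⁻¹ ⟨g • v0, hSinv g v0 hv0⟩ := by
              refine Subtype.ext ?_
              simp [mul_smul]
            have he2 : v0' = actIsoInduce X hadj hSinv g1⁻¹ ⟨g1 • v0, hSinv g1 v0 hv0⟩ := by
              refine Subtype.ext ?_
              simp [hv0']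
            rw [he1]
            conv_lhs => rw [he2]
            rw [hdistΓ]
            have htri := hScon.dist_triangle (u := (⟨g1 • v0, hSinv g1 v0 hv0⟩ : ↥S)) (v := s)
              (w := ⟨g • v0, hSinv g v0 hv0⟩)
            have hcomm : Γ.dist ⟨g1 • v0, hSinv g1 v0 hv0⟩ s
                = Γ.dist s ⟨g1 • v0, hSinv g1 v0 hv0⟩ := SimpleGraph.dist_comm
            omega
          have hmem := ih (Γ.dist v0' ⟨(g1⁻¹ * g) • v0, hSinv _ v0 hv0⟩) (by omega) (g1⁻¹ * g) rfl
          have : g = g1 * (g1⁻¹ * g) := by group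
          rw [this]
          exact Subgroup.mul_mem _ (Subgroup.subset_closure hg1T) hmem
        · exact Subgroup.subset_closure (by simp only [hT, Set.mem_setOf_eq]; omega)
    intro g
    exact main _ g rfl
  -- extract the finite set F
  have hgsel : ∀ s : ↥S, ∃ gs : G, (∃ g : G, g • v0 = (s : V)) → gs • v0 = (s : V) := by
    intro s
    by_cases h : ∃ g : G, g • v0 = (s : V)
    · exact ⟨h.choose, fun _ => h.choose_spec⟩
    · exact ⟨1, fun hh => absurd hh h⟩
  choose gsel hgselspec using hgsel
  set B : Set ↥S := {s : ↥S | Γ.dist v0' s ≤ 2 * N + 1} with hB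
  refine ⟨gsel '' B, Set.Finite.image _ (hball (2 * N + 1)), ?_⟩
  rw [eq_top_iff]
  intro g _
  have hg : g ∈ Subgroup.closure T := hTgen g
  have hsub : T ⊆ (Subgroup.closure ((MulAction.stabilizer G v0 : Set G) ∪ gsel '' B) : Set G) := by
    intro t ht
    set s : ↥S := ⟨t • v0, hSinv t v0 hv0⟩ with hs
    have hsB : s ∈ B := ht
    have hgs : gsel s • v0 = t • v0 := hgselspec s ⟨t, rfl⟩
    have hstab : (gsel s)⁻¹ * t ∈ MulAction.stabilizer G v0 := by
      rw [MulAction.mem_stabilizer_iff, mul_smul, ← hgs]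
      simp
    have : t = gsel s * ((gsel s)⁻¹ * t) := by group
    rw [this]
    exact Subgroup.mul_mem _
      (Subgroup.subset_closure (Or.inr ⟨s, hsB, rfl⟩))
      (Subgroup.subset_closure (Or.inl hstab))
  exact (Subgroup.closure_le _).mpr hsub hg

end GTAux4

namespace GTAux5
open SimpleGraph GTAux GTAux2

variable {G : Type*} [Group G] {V : Type*} [MulAction G V]

/-- The set of translates `g • b` over `g` carrying `a` to a fixed vertex `u'` is finite
whenever the stabilizer of `b` has finite relative index in the stabilizer of `a`. -/
lemma finite_transporter {a b u' : V}
    (h : (MulAction.stabilizer G b).relIndex (MulAction.stabilizer G a) ≠ 0) :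
    {y : V | ∃ g : G, g • a = u' ∧ g • b = y}.Finite := by
  by_cases hne : ∃ g₀ : G, g₀ • a = u'
  · obtain ⟨g₀, hg₀⟩ := hne
    have horb := finite_orbit_of_relindex (A := MulAction.stabilizer G a) (b := b) h
    refine Set.Finite.subset (horb.image (fun y => g₀ • y)) ?_
    rintro y ⟨g, hga, rfl⟩
    refine ⟨(g₀⁻¹ * g) • b, ⟨g₀⁻¹ * g, ?_, rfl⟩, ?_⟩
    · rw [MulAction.mem_stabilizer_iff, mul_smul, hga, ← hg₀]
      simp
    · simp [mul_smul]
  · refine Set.Finite.subset (Set.finite_empty) ?_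
    rintro y ⟨g, hga, rfl⟩
    exact absurd ⟨g, hga⟩ hne

end GTAux5

open SimpleGraph GTAux GTAux2 GTAux3 GTAux4 GTAux5

/-- If `X` and `Y` are cocompact `G`-trees with the same elliptic subgroups (the same
deformation space) and `X` contains a `G`-invariant subtree whose induced subgraph is
locally finite, then `Y` also contains such a subtree. -/
theorem locallyFinite_invariant_subtree_of_same_deformation_space
    (G : Type*) [Group G] (VX VY : Type*) [MulAction G VX] [MulAction G VY]
    (X : SimpleGraph VX) (Y : SimpleGraph VY)
    (hX : IsGTree G X) (hY : IsGTree G Y)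
    -- X and Y are cocompact
    (hXcc : Finite (Quotient (MulAction.orbitRel G VX)))
    (hYcc : Finite (Quotient (MulAction.orbitRel G VY)))
    -- X and Y have the same elliptic subgroups
    (hsame : ∀ H : Subgroup G,
      (∃ v : VX, ∀ h ∈ H, h • v = v) ↔ (∃ w : VY, ∀ h ∈ H, h • w = w))
    -- X contains a G-invariant locally finite subtree
    (hsub : ∃ S : Set VX, S.Nonempty ∧ (∀ (g : G), ∀ v ∈ S, g • v ∈ S) ∧
      (X.induce S).Connected ∧ (∀ v ∈ S, {w ∈ S | X.Adj v w}.Finite)) :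
    -- then so does Y
    ∃ S : Set VY, S.Nonempty ∧ (∀ (g : G), ∀ v ∈ S, g • v ∈ S) ∧
      (Y.induce S).Connected ∧ (∀ v ∈ S, {w ∈ S | Y.Adj v w}.Finite) := by
  classical
  obtain ⟨S, hSne, hSinv, hScon, hSloc⟩ := hsub
  obtain ⟨v0, hv0⟩ := hSne
  have hadjX := hX.adj_smul
  have hadjY := hY.adj_smul
  have hXconn : X.Connected := hX.isTree.isConnected
  have hXacyc : X.IsAcyclic := hX.isTree.IsAcyclic
  have hYconn : Y.Connected := hY.isTree.isConnected
  have hYacyc : Y.IsAcyclic := hY.isTree.IsAcyclic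
  -- Step 1: all stabilizers of vertices of S are commensurable
  have hadjcomm : ∀ a b : VX, a ∈ S → b ∈ S → X.Adj a b →
      (MulAction.stabilizer G b).relIndex (MulAction.stabilizer G a) ≠ 0 := by
    intro a b ha hb hab
    apply relindex_of_finite_orbit
    refine Set.Finite.subset (hSloc a ha) ?_
    rintro y ⟨g, hg, rfl⟩
    refine ⟨hSinv g b hb, ?_⟩
    have := hadjX g a b hab
    rwa [hg] at this
  have hcommS : ∀ (u v : ↥S),
      Subgroup.Commensurable (MulAction.stabilizer G (u : VX)) (MulAction.stabilizer G (v : VX)) := by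
    have key : ∀ (u v : ↥S) (W : (X.induce S).Walk u v),
        Subgroup.Commensurable (MulAction.stabilizer G (u : VX)) (MulAction.stabilizer G (v : VX)) := by
      intro u v W
      induction W with
      | nil => exact Subgroup.Commensurable.refl _
      | @cons a b c h q ih =>
        refine Subgroup.Commensurable.trans ?_ ih
        have hXab : X.Adj (a : VX) (b : VX) := h
        exact ⟨hadjcomm (b : VX) (a : VX) b.2 a.2 hXab.symm, hadjcomm (a : VX) (b : VX) a.2 b.2 hXab⟩
    intro u v
    exact (hScon.preconnected u v).elim (key u v)
  -- Step 2: every subgroup fixing a vertex of Y fixes a vertex of S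
  have hellipticY : ∀ (A : Subgroup G) (w' : VY), (∀ h ∈ A, h • w' = w') →
      ∃ p ∈ S, ∀ h ∈ A, h • p = p := by
    intro A w' hfixw
    obtain ⟨x, hx⟩ := (hsame A).mpr ⟨w', hfixw⟩
    exact exists_fixed_in_subtree hXacyc hXconn hadjX ⟨v0, hv0⟩ hSinv hScon hx
  -- Step 3: base vertex w in Y fixed by the stabilizer of v0
  set H0 : Subgroup G := MulAction.stabilizer G v0 with hH0
  obtain ⟨w, hw⟩ := (hsame H0).mp ⟨v0, fun h hh => hh⟩
  -- Step 4: finite generation over H0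
  obtain ⟨F, hFfin, hFgen⟩ :=
    exists_finite_generating_set hadjX hSinv hScon hSloc hXcc hv0
  -- Step 5: base paths in Y
  have hP : ∀ f : G, ∃ p : Y.Walk w (f • w), p.IsPath :=
    fun f => ⟨((hYconn.preconnected w (f • w)).some).bypass, Walk.bypass_isPath _⟩
  choose P hPpath using hP
  -- the G-translates of base edges
  set BaseE : Set (Sym2 VY) :=
    {e | ∃ (g : G) (f : G), f ∈ F ∧ ∃ e₀ ∈ (P f).edges, e = Sym2.map (fun y => g • y) e₀}
    with hBaseE
  have hBaseInv : ∀ (a : G) (e : Sym2 VY), e ∈ BaseE → Sym2.map (fun y => a • y) e ∈ BaseE := by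
    rintro a e ⟨g, f, hf, e₀, he₀, rfl⟩
    refine ⟨a * g, f, hf, e₀, he₀, ?_⟩
    rw [Sym2.map_map]
    congr 1
    funext y
    simp [mul_smul]
  -- the subgroup of elements reachable from w by BaseE-walks
  set R : Subgroup G :=
    { carrier := {g : G | ∃ W : Y.Walk w (g • w), ∀ e ∈ W.edges, e ∈ BaseE}
      one_mem' := ⟨Walk.nil.copy rfl (one_smul G w).symm, by simp [Walk.edges_copy]⟩
      mul_mem' := by
        rintro g1 g2 ⟨W1, h1⟩ ⟨W2, h2⟩
        refine ⟨W1.append ((W2.map (actIso Y hadjY g1).toHom).copy rfl (mul_smul g1 g2 w).symm),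
          ?_⟩
        intro e he
        rw [Walk.edges_append, List.mem_append] at he
        rcases he with he | he
        · exact h1 e he
        · erw [Walk.edges_copy, Walk.edges_map, List.mem_map] at he
          obtain ⟨e₀, he₀, rfl⟩ := he
          exact hBaseInv g1 e₀ (h2 e₀ he₀)
      inv_mem' := by
        rintro g ⟨W, h⟩
        refine ⟨((W.map (actIso Y hadjY g⁻¹).toHom).copy rfl (inv_smul_smul g w)).reverse, ?_⟩
        intro e he
        erw [Walk.edges_reverse, List.mem_reverse, Walk.edges_copy, Walk.edges_map,
          List.mem_map] at he
        obtain ⟨e₀, he₀, rfl⟩ := he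
        exact hBaseInv g⁻¹ e₀ (h e₀ he₀) } with hR
  have hRtop : ∀ g : G, ∃ W : Y.Walk w (g • w), ∀ e ∈ W.edges, e ∈ BaseE := by
    have hle : Subgroup.closure ((H0 : Set G) ∪ F) ≤ R := by
      rw [Subgroup.closure_le]
      rintro t (ht | ht)
      · exact ⟨Walk.nil.copy rfl (hw t ht).symm, by simp [Walk.edges_copy]⟩
      · refine ⟨P t, ?_⟩
        intro e he
        refine ⟨1, t, ht, e, he, ?_⟩
        have h1 : (fun y : VY => (1 : G) • y) = id := funext (one_smul G)
        rw [h1, Sym2.map_id]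
        rfl
    intro g
    have hg : g ∈ Subgroup.closure ((H0 : Set G) ∪ F) := by
      rw [hFgen]; exact Subgroup.mem_top g
    exact hle hg
  -- the candidate subtree
  set U : Set VY :=
    {y | ∃ g : G, y = g • w ∨ ∃ f ∈ F, ∃ c ∈ (P f).support, y = g • c} with hU
  have hUw : w ∈ U := ⟨1, Or.inl (one_smul G w).symm⟩
  have hUinv : ∀ (g : G), ∀ y ∈ U, g • y ∈ U := by
    rintro a y ⟨g, hy | ⟨f, hf, c, hc, hy⟩⟩
    · exact ⟨a * g, Or.inl (by rw [hy, mul_smul])⟩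
    · exact ⟨a * g, Or.inr ⟨f, hf, c, hc, by rw [hy, mul_smul]⟩⟩
  -- every vertex on a BaseE-walk is in U
  have hsupportU : ∀ {u' v' : VY} (W : Y.Walk u' v'), (∀ e ∈ W.edges, e ∈ BaseE) →
      u' ∈ U → ∀ y ∈ W.support, y ∈ U := by
    intro u' v' W hWe hu' y hy
    by_cases hlen : W.length = 0
    · have : u' = v' := Walk.eq_of_length_eq_zero hlen
      have hsupp : y = u' := by
        cases W with
        | nil => simpa using hy
        | cons h q => simp at hlen
      rw [hsupp]; exact hu'
    · obtain ⟨e, he, hye⟩ := mem_edge_of_mem_support W hy hlen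
      obtain ⟨g, f, hf, e₀, he₀, rfl⟩ := hWe e he
      rw [Sym2.mem_map] at hye
      obtain ⟨c, hc, rfl⟩ := hye
      -- c is an endpoint of an edge of P f, hence in its support
      have hcsupp : c ∈ (P f).support := by
        induction e₀ using Sym2.ind with
        | _ a b =>
          rcases (Sym2.mem_iff).mp hc with rfl | rfl
          · exact (P f).fst_mem_support_of_mem_edges he₀
          · exact (P f).snd_mem_support_of_mem_edges he₀
      exact ⟨g, Or.inr ⟨f, hf, c, hcsupp, rfl⟩⟩
  -- walks to w within U along BaseE edges
  have hwalkU : ∀ (u' : VY), u' ∈ U →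
      ∃ W : Y.Walk u' w, (∀ e ∈ W.edges, e ∈ BaseE) := by
    rintro u' ⟨g, hy | ⟨f, hf, c, hc, hy⟩⟩
    · obtain ⟨W, hWe⟩ := hRtop g
      refine ⟨(W.copy rfl hy.symm).reverse, ?_⟩
      intro e he
      rw [Walk.edges_reverse, List.mem_reverse, Walk.edges_copy] at he
      exact hWe e he
    · obtain ⟨W, hWe⟩ := hRtop g
      -- from u' = g • c back to g • w, then to w
      have hgc : (g • c) ∈ ((P f).map (actIso Y hadjY g).toHom).support := by
        rw [Walk.support_map, List.mem_map]
        exact ⟨c, hc, rfl⟩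
      set W2 := (((P f).map (actIso Y hadjY g).toHom).takeUntil (g • c) hgc).reverse with hW2
      refine ⟨(W2.copy hy.symm rfl).append ((W.copy rfl rfl).reverse), ?_⟩
      intro e he
      erw [Walk.edges_append, List.mem_append] at he
      rcases he with he | he
      · erw [Walk.edges_copy, hW2, Walk.edges_reverse, List.mem_reverse] at he
        have he2 := Walk.edges_takeUntil_subset _ hgc he
        rw [Walk.edges_map, List.mem_map] at he2
        obtain ⟨e₀, he₀, rfl⟩ := he2
        exact hBaseInv g e₀ ⟨1, f, hf, e₀, he₀, by
          have h1 : (fun y : VY => (1 : G) • y) = id := funext (one_smul G)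
          rw [h1, Sym2.map_id]
          rfl⟩
      · erw [Walk.edges_reverse, List.mem_reverse, Walk.edges_copy] at he
        exact hWe e he
  -- connectivity of the induced graph on U
  have hUreach : ∀ (u' : VY) (hu' : u' ∈ U),
      (Y.induce U).Reachable ⟨u', hu'⟩ ⟨w, hUw⟩ := by
    intro u' hu'
    obtain ⟨W, hWe⟩ := hwalkU u' hu'
    exact reachable_induce_of_walk W (hsupportU W hWe hu') hu' hUw
  have hUconn : (Y.induce U).Connected := by
    haveI : Nonempty ↥U := ⟨⟨w, hUw⟩⟩
    refine ⟨fun a b => ?_⟩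
    exact (hUreach a.1 a.2).trans (hUreach b.1 b.2).symm
  -- every edge of Y between vertices of U is a translate of a base edge
  have hedgeU : ∀ u' v' : VY, u' ∈ U → v' ∈ U → Y.Adj u' v' → s(u', v') ∈ BaseE := by
    intro u' v' hu' hv' hadj
    obtain ⟨W1, hW1⟩ := hwalkU u' hu'
    obtain ⟨W2, hW2⟩ := hwalkU v' hv'
    set Wt := W1.append W2.reverse with hWt
    have hWtE : ∀ e ∈ Wt.edges, e ∈ BaseE := by
      intro e he
      rw [hWt, Walk.edges_append, List.mem_append] at he
      rcases he with he | he
      · exact hW1 e he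
      · rw [Walk.edges_reverse, List.mem_reverse] at he
        exact hW2 e he
    have hsingle : (Walk.cons hadj Walk.nil : Y.Walk u' v').IsPath := by
      rw [Walk.cons_isPath_iff]
      exact ⟨Walk.IsPath.nil, by simp [hadj.ne]⟩
    have hpeq : (⟨Wt.bypass, Walk.bypass_isPath Wt⟩ : Y.Path u' v')
        = ⟨Walk.cons hadj Walk.nil, hsingle⟩ := hYacyc.path_unique _ _
    have hedge : s(u', v') ∈ Wt.bypass.edges := by
      have := congrArg (fun p : Y.Path u' v' => (p : Y.Walk u' v').edges) hpeq
      simp only at this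
      rw [this]
      simp
    exact hWtE _ (Walk.edges_bypass_subset Wt hedge)
  -- relative index bounds along the base paths
  set K : G → Subgroup G := fun f => H0 ⊓ MulAction.stabilizer G (f • v0) with hK
  have hKfixw : ∀ (f : G), ∀ k ∈ K f, k • w = w := fun f k hk => hw k hk.1
  have hKfixfw : ∀ (f : G), ∀ k ∈ K f, k • (f • w) = f • w := by
    intro f k hk
    have hk2 : k ∈ MulAction.stabilizer G (f • v0) := (Subgroup.mem_inf.mp hk).2
    rw [MulAction.stabilizer_smul_eq_stabilizer_map_conj, Subgroup.mem_map] at hk2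
    obtain ⟨h, hh, hkeq⟩ := hk2
    have hkeq' : f * h * f⁻¹ = k := hkeq
    rw [← hkeq', smul_smul]
    have : f * h * f⁻¹ * f = f * h := by group
    rw [this, mul_smul, hw h hh]
  have hKfixsupp : ∀ (f : G), ∀ y ∈ (P f).support, ∀ k ∈ K f, k • y = y := by
    intro f y hy k hk
    have := fix_path hYacyc (actIso Y hadjY k) (hKfixw f k hk) (hKfixfw f k hk)
      (P f) (hPpath f) y hy
    simpa using this
  have hKrelH0 : ∀ f : G, (K f).relIndex H0 ≠ 0 := by
    intro f
    have hcomm := hcommS ⟨f • v0, hSinv f v0 hv0⟩ ⟨v0, hv0⟩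
    show (H0 ⊓ MulAction.stabilizer G (f • v0)).relIndex H0 ≠ 0
    rw [Subgroup.inf_relIndex_left]
    exact hcomm.1
  have hrel_support : ∀ (f : G), ∀ y ∈ (P f).support,
      (K f).relIndex (MulAction.stabilizer G y) ≠ 0 := by
    intro f y hy
    obtain ⟨py, hpyS, hpyfix⟩ := hellipticY (MulAction.stabilizer G y) y (fun h hh => hh)
    have hle1 : K f ≤ MulAction.stabilizer G y := fun k hk =>
      (MulAction.mem_stabilizer_iff).mpr (hKfixsupp f y hy k hk)
    have hle2 : MulAction.stabilizer G y ≤ MulAction.stabilizer G py := fun h hh =>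
      (MulAction.mem_stabilizer_iff).mpr (hpyfix h hh)
    have hle3 : K f ≤ H0 ⊓ MulAction.stabilizer G py :=
      le_inf inf_le_left (le_trans hle1 hle2)
    have r1 : (K f).relIndex (H0 ⊓ MulAction.stabilizer G py) ≠ 0 := by
      have hmul := Subgroup.relIndex_mul_relIndex (K f) (H0 ⊓ MulAction.stabilizer G py) H0
        hle3 inf_le_left
      intro h0
      rw [h0, zero_mul] at hmul
      exact hKrelH0 f hmul.symm
    have r2 : (H0 ⊓ MulAction.stabilizer G py).relIndex (MulAction.stabilizer G py) ≠ 0 := by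
      rw [Subgroup.inf_relIndex_right]
      exact (hcommS ⟨v0, hv0⟩ ⟨py, hpyS⟩).1
    have r3 : (K f).relIndex (MulAction.stabilizer G py) ≠ 0 := by
      have hmul := Subgroup.relIndex_mul_relIndex (K f) (H0 ⊓ MulAction.stabilizer G py)
        (MulAction.stabilizer G py) hle3 inf_le_right
      rw [← hmul]
      exact mul_ne_zero r1 r2
    have hmul := Subgroup.relIndex_mul_relIndex (K f) (MulAction.stabilizer G y)
      (MulAction.stabilizer G py) hle1 hle2
    intro h0
    rw [h0, zero_mul] at hmul
    exact r3 hmul.symm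
  have hrel_edge : ∀ (f : G), ∀ (a b : VY), s(a, b) ∈ (P f).edges →
      (MulAction.stabilizer G b).relIndex (MulAction.stabilizer G a) ≠ 0 := by
    intro f a b he
    have ha := (P f).fst_mem_support_of_mem_edges he
    have hb := (P f).snd_mem_support_of_mem_edges he
    have hKa : K f ≤ MulAction.stabilizer G a := fun k hk =>
      (MulAction.mem_stabilizer_iff).mpr (hKfixsupp f a ha k hk)
    have hKb : K f ≤ MulAction.stabilizer G b := fun k hk =>
      (MulAction.mem_stabilizer_iff).mpr (hKfixsupp f b hb k hk)
    rw [← Subgroup.inf_relIndex_right]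
    have hle : K f ≤ MulAction.stabilizer G b ⊓ MulAction.stabilizer G a := le_inf hKb hKa
    have hmul := Subgroup.relIndex_mul_relIndex (K f)
      (MulAction.stabilizer G b ⊓ MulAction.stabilizer G a) (MulAction.stabilizer G a)
      hle inf_le_right
    intro h0
    rw [h0, mul_zero] at hmul
    exact hrel_support f a ha hmul.symm
  -- final assembly
  refine ⟨U, ⟨w, hUw⟩, hUinv, hUconn, ?_⟩
  intro u' hu'
  have hcover : {y ∈ U | Y.Adj u' y} ⊆
      ⋃ f ∈ F, ⋃ e₀ ∈ {e | e ∈ (P f).edges},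
        {y : VY | ∃ g : G, s(u', y) = Sym2.map (fun z => g • z) e₀} := by
    rintro y ⟨hyU, hyadj⟩
    obtain ⟨g, f, hf, e₀, he₀, heq⟩ := hedgeU u' y hu' hyU hyadj
    exact Set.mem_biUnion hf (Set.mem_biUnion he₀ ⟨g, heq⟩)
  refine Set.Finite.subset ?_ hcover
  refine Set.Finite.biUnion hFfin ?_
  intro f hf
  refine Set.Finite.biUnion (List.finite_toSet _) ?_
  intro e₀
  induction e₀ using Sym2.ind with
  | _ a b =>
    intro he₀
    have hT1 : {y : VY | ∃ g : G, g • a = u' ∧ g • b = y}.Finite :=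
      finite_transporter (hrel_edge f a b he₀)
    have hT2 : {y : VY | ∃ g : G, g • b = u' ∧ g • a = y}.Finite := by
      refine finite_transporter (hrel_edge f b a ?_)
      rwa [Sym2.eq_swap]
    refine Set.Finite.subset (hT1.union hT2) ?_
    rintro y ⟨g, hy⟩
    rw [Sym2.map_pair_eq, Sym2.eq_iff] at hy
    rcases hy with ⟨h1, h2⟩ | ⟨h1, h2⟩
    · exact Or.inl ⟨g, h1.symm, h2.symm⟩
    · exact Or.inr ⟨g, h1.symm, h2.symm⟩
end

section
/- Let Y be a G-tree containing a G-invariant subtree S whose induced subgraph is locally finite and which is non-trivial (no vertex of S is fixed by every element of G). Let X be a G-tree and let q be a G-equivariant surjective collapse map from the vertices of X to the vertices of Y (adjacent vertices map to equal or adjacent vertices, and the preimage of each vertex of Y induces a connected subgraph of X). Then q preserves hyperbolicity: every element g ∈ G that fixes no vertex of X also fixes no vertex of Y. -/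
namespace CollapseAux
open SimpleGraph Walk

variable {V : Type*} {T : SimpleGraph V}

/-- A walk is reduced if no dart is immediately followed by its reverse. -/
def Reduced {u v : V} (p : T.Walk u v) : Prop :=
  p.darts.Chain' fun d e => d.symm ≠ e

lemma Reduced.of_cons {u x v : V} {h : T.Adj u x} {q : T.Walk x v}
    (hr : Reduced (Walk.cons h q)) : Reduced q := by
  have := List.IsChain.tail (l := (Walk.cons h q).darts) hr
  simpa [Reduced, List.Chain', Walk.darts_cons] using this

lemma reduced_of_isPath {u v : V} {p : T.Walk u v} (hp : p.IsPath) : Reduced p := by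
  induction p with
  | nil => simp [Reduced, List.Chain']
  | cons h q ih =>
    rename_i a b c
    rw [Walk.cons_isPath_iff] at hp
    have hq := ih hp.1
    rw [Reduced, List.Chain', Walk.darts_cons, List.isChain_cons]
    refine ⟨?_, hq⟩
    intro e he
    cases q with
    | nil => simp at he
    | cons h' r =>
      rw [Walk.darts_cons, List.head?_cons, Option.mem_some_iff] at he
      subst he
      intro hcontra
      apply hp.2
      have : a = _ := congrArg (fun d => d.toProd.2) hcontra
      simp [Dart.symm] at this
      rw [Walk.support_cons]
      right
      rw [this]
      exact r.start_mem_support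

lemma isPath_closed_eq_nil {v : V} {p : T.Walk v v} (hp : p.IsPath) : p = Walk.nil := by
  cases p with
  | nil => rfl
  | cons h q =>
    rw [Walk.cons_isPath_iff] at hp
    exact absurd q.end_mem_support hp.2

/-- In a path from `x` to `u` containing the edge `s(u,x)`, the walk is that single edge. -/
lemma path_edge_start {x u : V} (r : T.Walk x u) (hr : r.IsPath) (hxu : u ≠ x)
    (he : s(u, x) ∈ r.edges) : ∃ (h : T.Adj x u), r = Walk.cons h Walk.nil := by
  induction r with
  | nil => simp at he
  | cons h' r' ih =>
    rename_i a z c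
    rw [Walk.edges_cons, List.mem_cons] at he
    rw [Walk.cons_isPath_iff] at hr
    rcases he with he | he
    · rw [Sym2.eq_iff] at he
      rcases he with ⟨h1, h2⟩ | ⟨h1, h2⟩
      · exact absurd h1 hxu
      · subst h1
        have := isPath_closed_eq_nil hr.1
        subst this
        exact ⟨h', rfl⟩
    · exact absurd (r'.snd_mem_support_of_mem_edges he) hr.2

lemma isPath_of_reduced (hac : T.IsAcyclic) {u v : V} {p : T.Walk u v}
    (hp : Reduced p) : p.IsPath := by
  classical
  induction p with
  | nil => exact Walk.IsPath.nil
  | cons h q ih =>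
    rename_i a b c
    have hq : q.IsPath := ih hp.of_cons
    rw [Walk.cons_isPath_iff]
    refine ⟨hq, ?_⟩
    intro hu
    set q₁ := q.takeUntil a hu with hq₁def
    have hq₁ : q₁.IsPath := hq.takeUntil hu
    by_cases he : s(a, b) ∈ q₁.edges
    · obtain ⟨h₃, hq₁eq⟩ := path_edge_start q₁ hq₁ h.ne he
      have hspec := q.take_spec hu
      rw [← hq₁def] at hspec
      rw [hq₁eq] at hspec
      -- q = cons h₃ (dropUntil ...), so p = cons h (cons h₃ ...)
      rw [Reduced, List.Chain', ← hspec, Walk.darts_cons, Walk.cons_append, Walk.darts_cons,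
        List.isChain_cons_cons] at hp
      apply hp.1
      ext <;> simp [Dart.symm]
    · have hcyc : (Walk.cons h q₁).IsCycle := by
        rw [Walk.cons_isCycle_iff]
        exact ⟨hq₁, he⟩
      exact hac _ hcyc

/-- From connectivity of an induced subgraph, get a path in the ambient graph with
support inside the set. -/
lemma exists_path_in_set {C : Set V} (hC : (T.induce C).Connected)
    {c c' : V} (hc : c ∈ C) (hc' : c' ∈ C) :
    ∃ p : T.Walk c c', p.IsPath ∧ ∀ z ∈ p.support, z ∈ C := by
  classical
  let hom : T.induce C →g T := ⟨fun a => a.1, fun {a b} hab => hab⟩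
  obtain ⟨w⟩ := hC.preconnected ⟨c, hc⟩ ⟨c', hc'⟩
  let w' : T.Walk c c' := (w.map hom).copy rfl rfl
  refine ⟨w'.bypass, w'.bypass_isPath, ?_⟩
  intro z hz
  have hz' := w'.support_bypass_subset hz
  rw [Walk.support_copy, Walk.support_map] at hz'
  obtain ⟨⟨z', hz'C⟩, _, rfl⟩ := List.mem_map.mp hz'
  exact hz'C


variable {G : Type*} [Group G] [MulAction G V]

def homOf (g : G) (hadj : ∀ u v : V, T.Adj u v → T.Adj (g • u) (g • v)) : T →g T :=
  ⟨fun x => g • x, fun {a b} hab => hadj a b hab⟩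

lemma fixInSubtree (ht : T.IsTree) {g : G}
    (hadj : ∀ u v : V, T.Adj u v → T.Adj (g • u) (g • v))
    {S : Set V} (hSne : S.Nonempty) (hSinv : ∀ y ∈ S, g • y ∈ S)
    (hSconn : (T.induce S).Connected) {w : V} (hw : g • w = w) :
    ∃ s ∈ S, g • s = s := by
  classical
  obtain ⟨s₀, hs₀⟩ := hSne
  suffices key : ∀ n : ℕ, ∀ w : V, g • w = w → (∃ s ∈ S, T.dist w s ≤ n) →
      ∃ s ∈ S, g • s = s by
    exact key (T.dist w s₀) w hw ⟨s₀, hs₀, le_rfl⟩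
  intro n
  induction n with
  | zero =>
    rintro w hw ⟨s, hs, hd⟩
    have h0 : T.dist w s = 0 := Nat.le_zero.mp hd
    have : w = s := (ht.isConnected.dist_eq_zero_iff).mp h0
    exact ⟨s, hs, by rw [← this]; exact hw⟩
  | succ n ih =>
    rintro w hw ⟨s, hs, hd⟩
    by_cases hnear : ∃ s' ∈ S, T.dist w s' ≤ n
    · exact ih w hw hnear
    push_neg at hnear
    have hds : T.dist w s = n + 1 := le_antisymm hd (hnear s hs)
    have hwS : w ∉ S := by
      intro hwS
      have := hnear w hwS
      simp [SimpleGraph.dist_self] at this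
    have hne : w ≠ s := by
      rintro rfl
      rw [SimpleGraph.dist_self] at hds
      omega
    obtain ⟨P, hPpath, hPlen⟩ := ht.isConnected.exists_path_of_dist w s
    obtain ⟨x, hwx, P₁, rfl⟩ := Walk.exists_eq_cons_of_ne hne P
    have hgx : g • x = x := by
      by_contra hgxne
      let Q : T.Walk w (g • s) := ((Walk.cons hwx P₁).map (homOf g hadj)).copy hw rfl
      have hQpath : Q.IsPath := by
        refine (Walk.isPath_copy _ _ _).mpr ?_
        exact Walk.map_isPath_of_injective (MulAction.injective g) hPpath
      let W := (Walk.cons hwx P₁).reverse.append Q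
      have hWred : Reduced W := by
        rw [Reduced, List.Chain', Walk.darts_append, List.isChain_append]
        refine ⟨reduced_of_isPath hPpath.reverse, reduced_of_isPath hQpath, ?_⟩
        intro d hd e he
        rw [Walk.darts_reverse, List.getLast?_reverse, List.head?_map,
          Walk.darts_cons, List.head?_cons] at hd
        simp only [Option.mem_def, Option.map_some] at hd
        have hd' : d = (Dart.mk (w, x) hwx).symm := (Option.some.inj hd).symm
        rw [show Q.darts = ((Walk.cons hwx P₁).map (homOf g hadj)).darts from
          Walk.darts_copy _ _ _, Walk.map_cons, Walk.darts_cons, List.head?_cons,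
          Option.mem_def] at he
        have he' : e = Dart.mk (g • w, g • x) ((homOf g hadj).map_adj hwx) := by
          have := Option.some.inj he
          rw [← this]
          rfl
        rw [hd', he', Dart.symm_symm]
        intro heq
        apply hgxne
        exact (congrArg (fun d : T.Dart => d.toProd.2) heq).symm
      have hWpath := isPath_of_reduced ht.IsAcyclic hWred
      obtain ⟨B', hB'path, hB'supp⟩ := exists_path_in_set hSconn hs (hSinv s hs)
      have hWB : W = B' := by
        have := ht.IsAcyclic.path_unique ⟨W, hWpath⟩ ⟨B', hB'path⟩
        exact Subtype.ext_iff.mp this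
      apply hwS
      refine hB'supp w ?_
      rw [← hWB]
      show w ∈ W.support
      rw [Walk.mem_support_append_iff]
      left
      exact Walk.end_mem_support _
    apply ih x hgx
    refine ⟨s, hs, ?_⟩
    have h1 : T.dist x s ≤ P₁.length := SimpleGraph.dist_le P₁
    have h2 := hPlen
    simp only [Walk.length_cons] at h2
    omega


/-- getLast? of the darts of a reversed nontrivial walk. -/
lemma getLast?_darts_reverse {u x v : V} (h : T.Adj u x) (p : T.Walk x v) :
    (Walk.cons h p).reverse.darts.getLast? = some (Dart.mk (x, u) h.symm) := by
  rw [Walk.darts_reverse, List.getLast?_reverse, List.head?_map, Walk.darts_cons,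
    List.head?_cons]
  rfl

lemma fixOfDisjointInvariant (ht : T.IsTree) {h : G}
    (hadj : ∀ u v : V, T.Adj u v → T.Adj (h • u) (h • v))
    {A B : Set V} (hAne : A.Nonempty) (hBne : B.Nonempty)
    (hAinv : ∀ x : V, x ∈ A ↔ h • x ∈ A) (hBinv : ∀ x : V, x ∈ B ↔ h • x ∈ B)
    (hAconn : (T.induce A).Connected) (hBconn : (T.induce B).Connected)
    (hdisj : ∀ x, x ∈ A → x ∈ B → False) :
    ∃ u : V, h • u = u := by
  classical
  set Dset : Set ℕ := {n | ∃ a ∈ A, ∃ b ∈ B, T.dist a b = n} with hDset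
  have hDne : Dset.Nonempty := by
    obtain ⟨a, ha⟩ := hAne
    obtain ⟨b, hb⟩ := hBne
    exact ⟨T.dist a b, a, ha, b, hb, rfl⟩
  obtain ⟨a, ha, b, hb, hab⟩ := Nat.sInf_mem hDne
  by_cases hga : h • a = a
  · exact ⟨a, hga⟩
  exfalso
  have hne_ab : a ≠ b := by
    rintro rfl
    exact hdisj a ha hb
  obtain ⟨P, hPpath, hPlen⟩ := ht.isConnected.exists_path_of_dist a b
  rw [hab] at hPlen
  obtain ⟨x, hax, P₁, rfl⟩ := Walk.exists_eq_cons_of_ne hne_ab P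
  have hlen1 : P₁.length + 1 = sInf Dset := by
    have := hPlen; simp only [Walk.length_cons] at this; omega
  have hxA : x ∉ A := by
    intro hxA
    have hmem : T.dist x b ∈ Dset := ⟨x, hxA, b, hb, rfl⟩
    have h1 := Nat.sInf_le hmem
    have h2 : T.dist x b ≤ P₁.length := SimpleGraph.dist_le P₁
    omega
  have hane : a ≠ h • a := fun e => hga e.symm
  obtain ⟨α, hαpath, hαsupp⟩ := exists_path_in_set hAconn ha ((hAinv a).mp ha)
  obtain ⟨a₁, haa₁, α₁, rfl⟩ := Walk.exists_eq_cons_of_ne hane α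
  have ha₁A : a₁ ∈ A := hαsupp a₁ (by rw [Walk.support_cons]; exact .tail _ α₁.start_mem_support)
  -- decompose the reverse of α to get its last dart
  have hane' : h • a ≠ a := hga
  obtain ⟨a₂, ha₂adj, β, hβ⟩ := Walk.exists_eq_cons_of_ne hane' (Walk.cons haa₁ α₁).reverse
  have ha₂A : a₂ ∈ A := by
    apply hαsupp a₂
    have : a₂ ∈ (Walk.cons haa₁ α₁).reverse.support := by
      rw [hβ, Walk.support_cons]
      exact .tail _ β.start_mem_support
    rwa [Walk.support_reverse, List.mem_reverse] at this
  have hαlast : (Walk.cons haa₁ α₁).darts.getLast? = some (Dart.mk (a₂, h • a) ha₂adj.symm) := by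
    conv_lhs => rw [← Walk.reverse_reverse (Walk.cons haa₁ α₁), hβ]
    exact getLast?_darts_reverse ha₂adj β
  set hom := homOf h hadj with hhom
  let P' : T.Walk (h • a) (h • b) := (Walk.cons hax P₁).map hom
  have hP'path : P'.IsPath := Walk.map_isPath_of_injective (MulAction.injective h) hPpath
  let W : T.Walk b (h • b) :=
    (Walk.cons hax P₁).reverse.append ((Walk.cons haa₁ α₁).append P')
  have hWred : Reduced W := by
    rw [Reduced, List.Chain', Walk.darts_append, List.isChain_append]
    refine ⟨reduced_of_isPath hPpath.reverse, ?_, ?_⟩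
    · rw [Walk.darts_append, List.isChain_append]
      refine ⟨reduced_of_isPath hαpath, reduced_of_isPath hP'path, ?_⟩
      intro d hd e he
      rw [Option.mem_def, hαlast] at hd
      have hd' := Option.some.inj hd
      rw [show P'.darts.head? = some (Dart.mk (h • a, h • x) (hom.map_adj hax)) from rfl,
        Option.mem_def] at he
      have he' := Option.some.inj he
      rw [← hd', ← he']
      intro heq
      have := congrArg (fun d : T.Dart => d.toProd.2) heq
      simp only [Dart.symm, Prod.swap] at this
      exact hxA ((hAinv x).mpr (by rw [← this]; exact ha₂A))
    · intro d hd e he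
      rw [Option.mem_def, getLast?_darts_reverse hax P₁] at hd
      have hd' := Option.some.inj hd
      rw [Walk.darts_append, List.head?_append, Walk.darts_cons, List.head?_cons,
        Option.mem_def] at he
      have he' : e = Dart.mk (a, a₁) haa₁ := by
        rw [Option.some_or] at he
        exact (Option.some.inj he).symm
      rw [← hd', he']
      intro heq
      have := congrArg (fun d : T.Dart => d.toProd.2) heq
      simp only [Dart.symm, Prod.swap] at this
      exact hxA (by rw [this]; exact ha₁A)
  have hWpath := isPath_of_reduced ht.IsAcyclic hWred
  obtain ⟨B', hB'path, hB'supp⟩ := exists_path_in_set hBconn hb ((hBinv b).mp hb)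
  have hWB : W = B' := by
    have := ht.IsAcyclic.path_unique ⟨W, hWpath⟩ ⟨B', hB'path⟩
    exact Subtype.ext_iff.mp this
  apply hdisj a ha
  refine hB'supp a ?_
  rw [← hWB]
  show a ∈ W.support
  rw [Walk.mem_support_append_iff]
  left
  rw [Walk.support_reverse, List.mem_reverse]
  exact (Walk.cons hax P₁).start_mem_support

/-- If a reduced nontrivial walk from `v` to `g • v` has no backtracking at the
junction with its `g`-translate, then iterating gives a contradiction with
`g ^ k • v = v`. -/
lemma iterWalk (hac : T.IsAcyclic)
    (hadjall : ∀ (h : G) (u v : V), T.Adj u v → T.Adj (h • u) (h • v))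
    {g : G} {k : ℕ} (hk : 0 < k) {v x y : V} {P : T.Walk v (g • v)}
    (hPpath : P.IsPath) (hPpos : 0 < P.length)
    {d₀ dL : T.Dart}
    (hd₀ : P.darts.head? = some d₀) (hd₀p : d₀.toProd = (v, x))
    (hdL : P.darts.getLast? = some dL) (hdLp : dL.toProd = (y, g • v))
    (hJ : y ≠ g • x) (hv : (g ^ k) • v = v) : False := by
  have key : ∀ i : ℕ, ∃ (c : V) (W : T.Walk v c),
      c = (g ^ (i + 1)) • v ∧ Reduced W ∧ 0 < W.length ∧
      ∃ dl : T.Dart, W.darts.getLast? = some dl ∧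
        dl.toProd = ((g ^ i) • y, (g ^ i) • (g • v)) := by
    intro i
    induction i with
    | zero =>
      refine ⟨g • v, P, by rw [pow_one], reduced_of_isPath hPpath, hPpos,
        dL, hdL, by rw [hdLp]; simp⟩
    | succ i ihh =>
      obtain ⟨c, W, hc, hred, hpos, dl, hlast, hdlp⟩ := ihh
      let f := homOf (g ^ (i + 1)) (hadjall (g ^ (i + 1)))
      let Pi : T.Walk c ((g ^ (i + 1)) • (g • v)) := (P.map f).copy hc.symm rfl
      have hPipath : Pi.IsPath := by
        refine (Walk.isPath_copy _ _ _).mpr ?_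
        exact Walk.map_isPath_of_injective (MulAction.injective _) hPpath
      have hPidarts : Pi.darts = P.darts.map f.mapDart := by
        refine (Walk.darts_copy _ _ _).trans ?_
        rw [Walk.darts_map]
      refine ⟨(g ^ (i + 1)) • (g • v), W.append Pi, ?_, ?_, ?_, ?_⟩
      · rw [pow_succ g (i + 1), mul_smul]
      · rw [Reduced, List.Chain', Walk.darts_append, List.isChain_append]
        refine ⟨hred, reduced_of_isPath hPipath, ?_⟩
        intro d hd e he
        rw [Option.mem_def, hlast] at hd
        have hd' := Option.some.inj hd
        rw [Option.mem_def, hPidarts, List.head?_map, hd₀] at he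
        have he' : e = f.mapDart d₀ := by
          have : Option.map f.mapDart (some d₀) = some (f.mapDart d₀) := rfl
          rw [this] at he
          exact (Option.some.inj he).symm
        rw [← hd', he']
        intro heq
        apply hJ
        have h2 : dl.toProd.swap = d₀.toProd.map ⇑f ⇑f := congrArg Dart.toProd heq
        rw [hdlp, hd₀p] at h2
        have h3 := congrArg Prod.snd h2
        simp only [Prod.swap, Prod.map] at h3
        have h4 : (g ^ i) • y = (g ^ i) • (g • x) := by
          rw [h3]
          show (g ^ (i + 1)) • x = _
          rw [pow_succ g i, mul_smul]
        exact MulAction.injective _ h4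
      · rw [Walk.length_append]; omega
      · refine ⟨f.mapDart dL, ?_, ?_⟩
        · rw [Walk.darts_append, List.getLast?_append, hPidarts, List.getLast?_map, hdL]
          rfl
        · show dL.toProd.map ⇑f ⇑f = _
          rw [hdLp]
          rfl
  obtain ⟨c, W, hc, hred, hpos, _⟩ := key (k - 1)
  rw [show k - 1 + 1 = k from Nat.succ_pred_eq_of_pos hk, hv] at hc
  let W' : T.Walk v v := W.copy rfl hc
  have hW'red : Reduced W' := by
    simp only [W']
    rw [Reduced, List.Chain', Walk.darts_copy]
    exact hred
  have := isPath_closed_eq_nil (isPath_of_reduced hac hW'red)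
  have hlen := congrArg Walk.length this
  rw [Walk.length_copy, Walk.length_nil] at hlen
  omega

lemma fixOfPowerFixed (ht : T.IsTree)
    (hadjall : ∀ (h : G) (u v : V), T.Adj u v → T.Adj (h • u) (h • v))
    {g : G} (hninv : ∀ u v : V, T.Adj u v → ¬(g • u = v ∧ g • v = u))
    {k : ℕ} (hk : 0 < k) {v : V} (hv : (g ^ k) • v = v) :
    ∃ x : V, g • x = x := by
  classical
  suffices key : ∀ D : ℕ, ∀ v : V, (g ^ k) • v = v → T.dist v (g • v) = D →
      ∃ x : V, g • x = x by exact key _ v hv rfl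
  intro D
  induction D using Nat.strong_induction_on with
  | _ D ih =>
  intro v hv hD
  rcases Nat.eq_zero_or_pos D with hD0 | hDpos
  · subst hD0
    exact ⟨v, ((ht.isConnected.dist_eq_zero_iff).mp hD).symm⟩
  have hvgv : v ≠ g • v := by
    intro e; rw [← e, SimpleGraph.dist_self] at hD; omega
  obtain ⟨P, hPpath, hPlen⟩ := ht.isConnected.exists_path_of_dist v (g • v)
  rw [hD] at hPlen
  obtain ⟨x, hvx, P₁, rfl⟩ := Walk.exists_eq_cons_of_ne hvgv P
  have hP₁len : P₁.length + 1 = D := by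
    have := hPlen; simp only [Walk.length_cons] at this; omega
  have e2 : (g ^ k) • (g • v) = g • v := by
    rw [smul_smul, ← pow_succ, pow_succ', mul_smul, hv]
  let Q : T.Walk v (g • v) :=
    ((Walk.cons hvx P₁).map (homOf (g ^ k) (hadjall (g ^ k)))).copy hv e2
  have hQpath : Q.IsPath := by
    refine (Walk.isPath_copy _ _ _).mpr ?_
    exact Walk.map_isPath_of_injective (MulAction.injective _) hPpath
  have hQP : Q = Walk.cons hvx P₁ :=
    Subtype.ext_iff.mp (ht.IsAcyclic.path_unique ⟨Q, hQpath⟩ ⟨_, hPpath⟩)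
  have hkx : (g ^ k) • x = x := by
    have hsupp := congrArg Walk.support hQP
    rw [show Q.support = ((Walk.cons hvx P₁).map (homOf (g ^ k) (hadjall (g ^ k)))).support from
      Walk.support_copy _ _ _, Walk.support_map] at hsupp
    simp only [Walk.support_cons] at hsupp
    rw [P₁.support_eq_cons] at hsupp
    simp only [List.map_cons] at hsupp
    exact (List.cons.inj (List.cons.inj hsupp).2).1
  rcases Nat.lt_or_ge D 2 with hD1 | hD2
  · -- D = 1
    have hP₁0 : P₁.length = 0 := by omega
    have hxgv : x = g • v := Walk.eq_of_length_eq_zero hP₁0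
    subst hxgv
    have hP₁nil : P₁ = Walk.nil := isPath_closed_eq_nil hPpath.of_cons
    subst hP₁nil
    by_cases hinv : g • (g • v) = v
    · exact absurd ⟨rfl, hinv⟩ (hninv v (g • v) hvx)
    · exact absurd hv (by
        intro _
        exact iterWalk ht.IsAcyclic hadjall hk (P := Walk.cons hvx Walk.nil) hPpath
          (by simp) (d₀ := Dart.mk (v, g • v) hvx) rfl rfl
          (dL := Dart.mk (v, g • v) hvx) rfl rfl (fun e => hinv e.symm) hv)
  · -- D ≥ 2
    have hxgv : x ≠ g • v := by
      intro e
      subst e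
      have := congrArg Walk.length (isPath_closed_eq_nil hPpath.of_cons)
      rw [Walk.length_nil] at this
      omega
    obtain ⟨y, hgvy, β, hβ⟩ := Walk.exists_eq_cons_of_ne (Ne.symm hxgv) P₁.reverse
    have h5 : P₁.darts.getLast? = some (Dart.mk (y, g • v) hgvy.symm) := by
      conv_lhs => rw [← Walk.reverse_reverse P₁, hβ]
      exact getLast?_darts_reverse hgvy β
    have hdL : (Walk.cons hvx P₁).darts.getLast? = some (Dart.mk (y, g • v) hgvy.symm) := by
      rw [Walk.darts_cons,
        show (Dart.mk (v, x) hvx :: P₁.darts) = [Dart.mk (v, x) hvx] ++ P₁.darts from rfl,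
        List.getLast?_append, h5]
      rfl
    have hβlen : β.length + 2 = D := by
      have hrl : P₁.reverse.length = P₁.length := Walk.length_reverse P₁
      rw [hβ] at hrl
      simp only [Walk.length_cons] at hrl
      omega
    by_cases hcase : y = g • x
    · have hdist : T.dist x (g • x) < D := by
        rw [← hcase]
        have h6 : T.dist x y ≤ β.reverse.length := SimpleGraph.dist_le β.reverse
        rw [Walk.length_reverse] at h6
        omega
      exact ih _ hdist x hkx rfl
    · exact absurd hv (by
        intro _
        exact iterWalk ht.IsAcyclic hadjall hk hPpath (by simp [Walk.length_cons])
          (d₀ := Dart.mk (v, x) hvx) rfl rfl hdL rfl hcase hv)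

end CollapseAux

/-- If `Y` is a `G`-tree containing a non-trivial locally finite `G`-invariant subtree
and `q : X → Y` is a `G`-equivariant collapse map (surjective simplicial map with
connected point preimages), then `q` preserves hyperbolicity: every `g ∈ G` fixing no
vertex of `X` also fixes no vertex of `Y`. -/
theorem collapse_map_preserves_hyperbolicity
    (G : Type*) [Group G] (VX VY : Type*) [MulAction G VX] [MulAction G VY]
    (X : SimpleGraph VX) (Y : SimpleGraph VY)
    (hX : IsGTree G X) (hY : IsGTree G Y)
    -- Y contains a non-trivial locally finite G-invariant subtree S
    (S : Set VY) (hSne : S.Nonempty)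
    (hSinv : ∀ (g : G), ∀ v ∈ S, g • v ∈ S)
    (hSconn : (Y.induce S).Connected)
    (hSlf : ∀ v ∈ S, {w ∈ S | Y.Adj v w}.Finite)
    (hSnontriv : ¬ ∃ v ∈ S, ∀ g : G, g • v = v)
    -- q is a G-equivariant collapse map
    (q : VX → VY)
    (hq_equiv : ∀ (g : G) (x : VX), q (g • x) = g • q x)
    (hq_surj : Function.Surjective q)
    (hq_simp : ∀ u v : VX, X.Adj u v → q u = q v ∨ Y.Adj (q u) (q v))
    (hq_conn : ∀ y : VY, (X.induce (q ⁻¹' {y})).Connected) :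
    ∀ g : G, (∀ v : VX, g • v ≠ v) → ∀ w : VY, g • w ≠ w := by
  intro g hgX w hgw
  -- `g` fixes some vertex of the invariant subtree `S`
  obtain ⟨s, hs, hgs⟩ := CollapseAux.fixInSubtree hY.isTree (hY.adj_smul g) hSne
    (hSinv g) hSconn hgw
  by_cases hN : {t ∈ S | Y.Adj s t}.Nonempty
  · obtain ⟨u, huS, hadj_su⟩ := hN
    -- all iterates of `u` under `g` are neighbours of `s` in `S`
    have hNmem : ∀ i : ℕ, (g ^ i) • u ∈ {t ∈ S | Y.Adj s t} := by
      intro i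
      induction i with
      | zero => simpa using ⟨huS, hadj_su⟩
      | succ i ihh =>
        have hrw : (g ^ (i + 1)) • u = g • ((g ^ i) • u) := by
          rw [pow_succ', mul_smul]
        refine ⟨by rw [hrw]; exact hSinv g _ ihh.1, ?_⟩
        have h2 := hY.adj_smul g s ((g ^ i) • u) ihh.2
        rw [hgs] at h2
        rw [hrw]
        exact h2
    have hfin := hSlf s hs
    have hcol : ∃ i j : ℕ, i ≠ j ∧
        (⟨(g ^ i) • u, hNmem i⟩ : {t ∈ S | Y.Adj s t}) = ⟨(g ^ j) • u, hNmem j⟩ := by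
      have _inst := hfin.to_subtype
      exact Finite.exists_ne_map_eq_of_infinite
        (fun i : ℕ => (⟨(g ^ i) • u, hNmem i⟩ : {t ∈ S | Y.Adj s t}))
    obtain ⟨i, j, hij, hije⟩ := hcol
    rw [Subtype.mk.injEq] at hije
    have main : ∀ i j : ℕ, i < j → (g ^ i) • u = (g ^ j) • u → False := by
      intro i j hlt he
      have hmpos : 0 < j - i := by omega
      have hmu : (g ^ (j - i)) • u = u := by
        have hsplit : g ^ j = g ^ i * g ^ (j - i) := by
          rw [← pow_add]
          congr 1
          omega
        rw [hsplit, mul_smul] at he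
        exact (MulAction.injective (g ^ i) he).symm
      have hms : (g ^ (j - i)) • s = s := by
        induction (j - i) with
        | zero => simp
        | succ n ihn => rw [pow_succ, mul_smul, hgs, ihn]
      have hsu : s ≠ u := hadj_su.ne
      have hAinv : ∀ z : VX, z ∈ q ⁻¹' {s} ↔ (g ^ (j - i)) • z ∈ q ⁻¹' {s} := by
        intro z
        simp only [Set.mem_preimage, Set.mem_singleton_iff, hq_equiv]
        constructor
        · intro hz; rw [hz, hms]
        · intro hz
          have : (g ^ (j - i)) • q z = (g ^ (j - i)) • s := by rw [hz, hms]
          exact MulAction.injective _ this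
      have hBinv : ∀ z : VX, z ∈ q ⁻¹' {u} ↔ (g ^ (j - i)) • z ∈ q ⁻¹' {u} := by
        intro z
        simp only [Set.mem_preimage, Set.mem_singleton_iff, hq_equiv]
        constructor
        · intro hz; rw [hz, hmu]
        · intro hz
          have : (g ^ (j - i)) • q z = (g ^ (j - i)) • u := by rw [hz, hmu]
          exact MulAction.injective _ this
      obtain ⟨xfix, hxfix⟩ := CollapseAux.fixOfDisjointInvariant hX.isTree
        (hX.adj_smul (g ^ (j - i))) (A := q ⁻¹' {s}) (B := q ⁻¹' {u})
        (hq_surj s) (hq_surj u) hAinv hBinv (hq_conn s) (hq_conn u)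
        (fun z hz1 hz2 => hsu (by
          simp only [Set.mem_preimage, Set.mem_singleton_iff] at hz1 hz2
          rw [← hz1, ← hz2]))
      obtain ⟨x', hx'⟩ := CollapseAux.fixOfPowerFixed hX.isTree hX.adj_smul
        (hX.no_inversions g) hmpos hxfix
      exact hgX x' hx'
    rcases hij.lt_or_gt with hlt | hlt
    · exact main i j hlt hije
    · exact main j i hlt hije.symm
  · -- `s` has no neighbours in `S`, so `S = {s}` and `s` is globally fixed
    apply hSnontriv
    refine ⟨s, hs, ?_⟩
    have hsingle : ∀ t ∈ S, t = s := by
      intro t ht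
      by_contra hts
      obtain ⟨p, hppath, hpsupp⟩ := CollapseAux.exists_path_in_set hSconn hs ht
      obtain ⟨z, hsz, p₁, rfl⟩ :=
        SimpleGraph.Walk.exists_eq_cons_of_ne (fun e => hts e.symm) p
      have hzS : z ∈ S := hpsupp z (by
        rw [SimpleGraph.Walk.support_cons]
        exact List.mem_cons_of_mem _ p₁.start_mem_support)
      exact hN ⟨z, hzS, hsz⟩
    intro g'
    exact hsingle (g' • s) (hSinv g' s hs)
end

section
/- Every reduced G-tree is minimal: if T is a G-tree such that for all adjacent vertices u, v lying in distinct G-orbits neither stabilizer(u) ≤ stabilizer(v) nor stabilizer(v) ≤ stabilizer(u), then the only nonempty G-invariant set of vertices of T whose induced subgraph is connected is the full vertex set of T. -/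
/-- From a walk starting outside `S` and ending inside `S`, extract a boundary edge. -/
lemma exists_boundary_edge {V : Type*} {T : SimpleGraph V} (S : Set V) :
    ∀ {a b : V} (_ : T.Walk a b), a ∉ S → b ∈ S →
      ∃ u w, T.Adj u w ∧ u ∉ S ∧ w ∈ S := by
  intro a b p
  induction p with
  | nil => intro h h'; exact absurd h' h
  | @cons x y z h p ih =>
    intro ha hb
    by_cases hy : y ∈ S
    · exact ⟨x, y, h, ha, hy⟩
    · exact ih hy hb

/-- Every reduced `G`-tree is minimal: if for all adjacent vertices `u, v` in distinct
`G`-orbits neither stabilizer contains the other, then the only `G`-invariant subtree is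
the whole tree. -/
theorem reduced_implies_minimal
    (G : Type*) [Group G] (V : Type*) [MulAction G V] (T : SimpleGraph V)
    (hT : IsGTree G T)
    -- T is reduced
    (hred : ∀ u v : V, T.Adj u v → u ∉ MulAction.orbit G v →
      ¬(MulAction.stabilizer G u ≤ MulAction.stabilizer G v) ∧
      ¬(MulAction.stabilizer G v ≤ MulAction.stabilizer G u)) :
    ∀ S : Set V, S.Nonempty → (∀ (g : G), ∀ v ∈ S, g • v ∈ S) →
      (T.induce S).Connected → S = Set.univ := by
  classical
  intro S hSne hSinv hSconn
  by_contra hne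
  obtain ⟨v, hv⟩ : ∃ v, v ∉ S := by
    by_contra h
    push_neg at h
    exact hne (Set.eq_univ_of_forall h)
  obtain ⟨s₀, hs₀⟩ := hSne
  obtain ⟨p⟩ := hT.isTree.isConnected.preconnected v s₀
  obtain ⟨u, w, hadj, hu, hw⟩ := exists_boundary_edge S p hv hs₀
  -- stabilizer u ≤ stabilizer w
  have hle : MulAction.stabilizer G u ≤ MulAction.stabilizer G w := by
    intro g hg
    have hgu : g • u = u := hg
    have hw' : g • w ∈ S := hSinv g w hw
    have hadj' : T.Adj u (g • w) := by
      have := hT.adj_smul g u w hadj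
      rwa [hgu] at this
    rw [MulAction.mem_stabilizer_iff]
    by_contra hne2
    -- a walk from w to g • w within S
    obtain ⟨q⟩ := hSconn.preconnected ⟨w, hw⟩ ⟨g • w, hw'⟩
    let q' : T.Walk w (g • w) :=
      q.map (SimpleGraph.Embedding.induce S).toHom
    have hsub : ∀ x ∈ q'.support, x ∈ S := by
      intro x hx
      simp only [q', SimpleGraph.Walk.support_map] at hx
      obtain ⟨y, _, rfl⟩ := List.mem_map.mp (by change x ∈ (q.map (SimpleGraph.Embedding.induce S).toHom).support at hx; rwa [SimpleGraph.Walk.support_map] at hx)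
      exact y.2
    -- the two-edge path w - u - g • w
    let p2 : T.Walk w (g • w) :=
      SimpleGraph.Walk.cons hadj.symm (SimpleGraph.Walk.cons hadj' SimpleGraph.Walk.nil)
    have hp2 : p2.IsPath := by
      simp only [p2, SimpleGraph.Walk.isPath_def, SimpleGraph.Walk.support_cons,
        SimpleGraph.Walk.support_nil]
      refine List.nodup_cons.mpr ⟨?_, List.nodup_cons.mpr ⟨?_, List.nodup_singleton _⟩⟩
      · simp only [List.mem_cons, List.mem_singleton]
        rintro (rfl | h | h)
        · exact hadj.ne rfl
        · exact hne2 h.symm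
        · simp at h
      · simp only [List.mem_singleton]
        intro h
        exact hadj'.ne h
    have huniq := hT.isTree.IsAcyclic.path_unique ⟨p2, hp2⟩ q'.toPath
    have hmem : u ∈ (q'.toPath : T.Walk w (g • w)).support := by
      rw [← huniq]
      simp [p2]
    exact hu (hsub u (SimpleGraph.Walk.support_toPath_subset q' hmem))
  have horb : u ∉ MulAction.orbit G w := by
    rintro ⟨g, rfl⟩
    exact hu (hSinv g w hw)
  exact (hred u w hadj horb).1 hle
end

section
/- Let X be a G-tree. Call a vertex x inessential if x has exactly two neighbors y₁ and y₂ and stabilizer(x) ≤ stabilizer(y₁) and stabilizer(x) ≤ stabilizer(y₂); call x essential otherwise. If X has at least one essential vertex, then every elliptic subgroup of G fixes an essential vertex: for every subgroup H ≤ G that fixes some vertex of X, there is an essential vertex fixed by every element of H. -/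
/-- A vertex `x` of a `G`-tree is *inessential* if it has exactly two neighbors `y₁, y₂`
and its stabilizer is contained in the stabilizers of both; otherwise `x` is
*essential*. -/
def Inessential (G : Type*) [Group G] {V : Type*} [MulAction G V] (T : SimpleGraph V)
    (x : V) : Prop :=
  ∃ y₁ y₂ : V, y₁ ≠ y₂ ∧ T.neighborSet x = {y₁, y₂} ∧
    MulAction.stabilizer G x ≤ MulAction.stabilizer G y₁ ∧
    MulAction.stabilizer G x ≤ MulAction.stabilizer G y₂

open MulAction

section

variable {G : Type*} [Group G] {V : Type*} [MulAction G V] {T : SimpleGraph V}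

theorem Inessential.stabilizer_le_of_adj {x y : V} (hx : Inessential G T x) (hxy : T.Adj x y) :
    stabilizer G x ≤ stabilizer G y := by
  obtain ⟨y₁, y₂, -, hnbr, h₁, h₂⟩ := hx
  have hy : y ∈ T.neighborSet x := hxy
  rw [hnbr] at hy
  rcases hy with rfl | rfl
  · exact h₁
  · exact h₂

theorem SimpleGraph.Walk.exists_not_inessential_stabilizer_le {v x : V} (p : T.Walk v x)
    (hx : ¬ Inessential G T x) :
    ∃ w, ¬ Inessential G T w ∧ stabilizer G v ≤ stabilizer G w := by
  induction p with
  | nil => exact ⟨_, hx, le_rfl⟩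
  | @cons u _ _ hadj _ ih =>
    by_cases hu : Inessential G T u
    · obtain ⟨w, hw, hle⟩ := ih hx
      exact ⟨w, hw, (hu.stabilizer_le_of_adj hadj).trans hle⟩
    · exact ⟨u, hu, le_rfl⟩

end

/-- If a `G`-tree has at least one essential vertex, then every elliptic subgroup fixes
an essential vertex. -/
theorem elliptic_subgroup_fixes_essential_vertex
    (G : Type*) [Group G] (V : Type*) [MulAction G V] (X : SimpleGraph V)
    (hX : IsGTree G X)
    (hess : ∃ x : V, ¬ Inessential G X x) :
    ∀ H : Subgroup G, (∃ v : V, ∀ h ∈ H, h • v = v) →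
      ∃ v : V, ¬ Inessential G X v ∧ ∀ h ∈ H, h • v = v := by
  rintro H ⟨v, hv⟩
  obtain ⟨x, hx⟩ := hess
  obtain ⟨p⟩ := hX.isTree.connected.preconnected v x
  obtain ⟨w, hw, hle⟩ := p.exists_not_inessential_stabilizer_le hx
  exact ⟨w, hw, fun h hh => hle (hv h hh)⟩
end

section
/- In a locally finite G-tree, all vertex stabilizers are commensurable: if T is a G-tree in which every vertex has finitely many neighbors, then for any two vertices u, v, the intersection stabilizer(u) ⊓ stabilizer(v) has finite index in both stabilizer(u) and stabilizer(v). -/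
namespace SimpleGraph

variable {V W : Type*} {G : SimpleGraph V}

theorem edist_map_le {H : SimpleGraph W} (f : G →g H) (u v : V) :
    H.edist (f u) (f v) ≤ G.edist u v := by
  by_cases huv : G.Reachable u v
  · obtain ⟨p, hp⟩ := huv.exists_walk_length_eq_edist
    calc H.edist (f u) (f v) ≤ (p.map f).length := (p.map f).edist_le
      _ = G.edist u v := by rw [Walk.length_map, hp]
  · simp [edist_eq_top_of_not_reachable huv]

theorem ball_add_one_subset (c : V) (n : ℕ) :
    G.ball c (n + 1) ⊆ insert c (⋃ x ∈ G.ball c n, G.neighborSet x) := by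
  intro v hv
  rw [mem_ball] at hv
  obtain ⟨p, hp⟩ := (reachable_of_edist_ne_top hv.ne_top).exists_walk_length_eq_edist
  cases p with
  | nil => exact Set.mem_insert _ _
  | @cons _ x _ hadj q =>
    refine Set.mem_insert_of_mem _ (Set.mem_biUnion (x := x) ?_ hadj.symm)
    rw [← hp, Walk.length_cons, Nat.cast_add_one] at hv
    exact q.edist_le.trans_lt (by exact_mod_cast Nat.lt_of_add_lt_add_right (by exact_mod_cast hv))

theorem finite_ball (hlf : ∀ v : V, (G.neighborSet v).Finite) (c : V) (n : ℕ) :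
    (G.ball c n).Finite := by
  induction n with
  | zero => simp
  | succ n ih =>
    exact ((ih.biUnion fun x _ ↦ hlf x).insert c).subset (ball_add_one_subset c n)

end SimpleGraph

namespace MulAction

variable {G X : Type*} [Group G] [MulAction G X]

theorem stabilizer_subgroupOf (H : Subgroup G) (x : X) :
    (stabilizer G x).subgroupOf H = stabilizer H x :=
  rfl

theorem finiteIndex_stabilizer_of_finite_orbit {x : X} (hx : (orbit G x).Finite) :
    (stabilizer G x).FiniteIndex := by
  rw [Subgroup.finiteIndex_iff, index_stabilizer]
  exact ((Set.ncard_pos hx).mpr ⟨x, mem_orbit_self x⟩).ne'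

end MulAction

open MulAction SimpleGraph in
theorem finiteIndex_inf_stabilizer_of_reachable {G V : Type*} [Group G] [MulAction G V]
    {T : SimpleGraph V} (hadj : ∀ (g : G) (u v : V), T.Adj u v → T.Adj (g • u) (g • v))
    (hlf : ∀ v : V, (T.neighborSet v).Finite) {u v : V} (huv : T.Reachable u v) :
    ((stabilizer G u ⊓ stabilizer G v).subgroupOf (stabilizer G u)).FiniteIndex := by
  rw [Subgroup.inf_subgroupOf_left, stabilizer_subgroupOf]
  apply finiteIndex_stabilizer_of_finite_orbit
  obtain ⟨n, hn⟩ := ENat.ne_top_iff_exists.mp (edist_ne_top_iff_reachable.mpr huv.symm)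
  refine (finite_ball hlf u (n + 1)).subset ?_
  rintro _ ⟨g, rfl⟩
  have hgu : (g : G) • u = u := g.2
  let smulHom : T →g T := ⟨((g : G) • ·), hadj g _ _⟩
  calc T.edist ((g : G) • v) u = T.edist ((g : G) • v) ((g : G) • u) := by rw [hgu]
    _ ≤ T.edist v u := edist_map_le smulHom v u
    _ < (n + 1 : ℕ) := by rw [← hn]; exact_mod_cast n.lt_add_one

/-- In a locally finite `G`-tree all vertex stabilizers are commensurable: for any two
vertices `u, v`, the intersection of their stabilizers has finite index in both. -/
theorem stabilizers_commensurable_of_locallyFinite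
    (G : Type*) [Group G] (V : Type*) [MulAction G V] (T : SimpleGraph V)
    (hT : IsGTree G T)
    (hlf : ∀ v : V, (T.neighborSet v).Finite) :
    ∀ u v : V,
      (((MulAction.stabilizer G u ⊓ MulAction.stabilizer G v).subgroupOf
        (MulAction.stabilizer G u)).FiniteIndex) ∧
      (((MulAction.stabilizer G u ⊓ MulAction.stabilizer G v).subgroupOf
        (MulAction.stabilizer G v)).FiniteIndex) := by
  intro u v
  have hconn : T.Connected := hT.isTree.connected
  refine ⟨finiteIndex_inf_stabilizer_of_reachable hT.adj_smul hlf (hconn u v), ?_⟩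
  rw [inf_comm]
  exact finiteIndex_inf_stabilizer_of_reachable hT.adj_smul hlf (hconn v u)
end
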